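/- arXiv:2006.08277 — 6 statements merged into one kernel-verified Lean document; each statement's English description precedes it below -/
import Mathlib

section
/- If B is a non-meager subset of Cantor space 2^ℕ with the Baire property, then B is not G₀-independent; that is, there exist x, y ∈ B with (x, y) ∈ G₀. -/
open Filter Topology

/-- Concatenation of a finite binary string with a point of Cantor space. -/
def cat01 (l : List Bool) (c : ℕ → Bool) : ℕ → Bool :=
  fun k => if h : k < l.length then l.get ⟨k, h⟩ else c (k - l.length)

/-- The digraph `G₀` on Cantor space determined by the sequence of strings `s`. -/
def G0 (s : ℕ → List Bool) : Set ((ℕ → Bool) × (ℕ → Bool)) :=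
  {p | ∃ n : ℕ, ∃ c : ℕ → Bool,
    p = (cat01 (s n ++ [false]) c, cat01 (s n ++ [true]) c)}

/-!
A set with the Baire property that is not meagre is comeagre in some nonempty open set, hence in
some basic clopen set `N_t`. By density pick `s n` extending `t`: the two maps
`c ↦ s n ⌢ i ⌢ c` (`i = 0, 1`) are open embeddings of Cantor space into `N_t`, so `B` pulls back
to a comeagre set under each of them, and by the Baire category theorem some `c` lies in both
pullbacks, giving a `G₀`-edge inside `B`.
-/

open Set

theorem exists_isOpen_nonempty_isMeagre_diff {X : Type*} [TopologicalSpace X] {B : Set X}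
    (hBP : ∃ U : Set X, IsOpen U ∧ IsMeagre (symmDiff B U)) (hB : ¬ IsMeagre B) :
    ∃ U : Set X, IsOpen U ∧ U.Nonempty ∧ IsMeagre (U \ B) := by
  obtain ⟨U, hU, hM⟩ := hBP
  refine ⟨U, hU, nonempty_of_not_isMeagre fun hUm => hB ?_, hM.mono fun x hx => Or.inr hx⟩
  refine (hM.union hUm).mono fun x hx => ?_
  by_cases h : x ∈ U
  · exact Or.inr h
  · exact Or.inl (Or.inl ⟨hx, h⟩)

theorem exists_forall_apply_mem_of_isMeagre_diff {X Y ι : Type*} [TopologicalSpace X]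
    [BaireSpace X] [Nonempty X] [TopologicalSpace Y] [Countable ι] {f : ι → X → Y}
    (hf : ∀ i, Continuous (f i)) (hfo : ∀ i, IsOpenMap (f i)) {U B : Set Y}
    (hU : ∀ i, range (f i) ⊆ U) (hUB : IsMeagre (U \ B)) :
    ∃ c, ∀ i, f i c ∈ B := by
  have hbad : IsMeagre (⋃ i, f i ⁻¹' (U \ B)) :=
    isMeagre_iUnion fun i => hUB.preimage_of_isOpenMap (hf i) (hfo i)
  obtain ⟨c, -, hc⟩ : (univ \ ⋃ i, f i ⁻¹' (U \ B)).Nonempty := by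
    by_contra h
    rw [not_nonempty_iff_eq_empty, sdiff_eq_empty] at h
    exact not_isMeagre_of_isOpen isOpen_univ univ_nonempty (hbad.mono h)
  exact ⟨c, fun i => by_contra fun hi => hc (mem_iUnion.2 ⟨i, hU i (mem_range_self c), hi⟩)⟩

theorem cat01_apply_add_length (l : List Bool) (c : ℕ → Bool) (k : ℕ) :
    cat01 l c (k + l.length) = c k := by
  simp [cat01]

theorem cat01_append (l r : List Bool) (c : ℕ → Bool) :
    cat01 (l ++ r) c = cat01 l (cat01 r c) := by
  funext k
  simp only [cat01, List.length_append, List.get_eq_getElem]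
  split_ifs <;> first | omega | simp_all [Nat.sub_sub]

theorem continuous_cat01 (l : List Bool) : Continuous (cat01 l) :=
  continuous_pi fun k => by
    by_cases h : k < l.length
    · simpa [cat01, h] using continuous_const
    · simpa [cat01, h] using continuous_apply _

theorem mem_range_cat01_iff {l : List Bool} {x : ℕ → Bool} :
    x ∈ range (cat01 l) ↔ ∀ i (h : i < l.length), x i = l[i] := by
  constructor
  · rintro ⟨c, rfl⟩ i h
    simp [cat01, h]
  · intro hx
    refine ⟨fun k => x (k + l.length), funext fun k => ?_⟩
    by_cases h : k < l.length
    · simp [cat01, h, hx]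
    · simp only [cat01, h, dite_false]
      congr 1
      omega

theorem range_cat01_subset_of_prefix {l l' : List Bool} (h : l <+: l') :
    range (cat01 l') ⊆ range (cat01 l) := by
  obtain ⟨r, rfl⟩ := h
  rintro _ ⟨c, rfl⟩
  exact ⟨cat01 r c, (cat01_append l r c).symm⟩

theorem PiNat.cylinder_eq_range_cat01 (x : ℕ → Bool) (m : ℕ) :
    PiNat.cylinder x m = range (cat01 (List.ofFn fun i : Fin m => x i)) := by
  ext y
  rw [mem_range_cat01_iff]
  simp

theorem isOpen_range_cat01 (l : List Bool) : IsOpen (range (cat01 l)) := by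
  have : range (cat01 l) = PiNat.cylinder (cat01 l fun _ => false) l.length := by
    rw [PiNat.cylinder_eq_range_cat01]
    congr
    apply List.ext_getElem <;> simp [cat01]
  rw [this]
  exact PiNat.isOpen_cylinder _ _ _

theorem isOpenMap_cat01 (l : List Bool) : IsOpenMap (cat01 l) := by
  have hemb : IsEmbedding (cat01 l) :=
    .of_leftInverse (fun c => funext (cat01_apply_add_length l c))
      (continuous_pi fun k => continuous_apply (k + l.length)) (continuous_cat01 l)
  exact hemb.isInducing.isOpenMap (isOpen_range_cat01 l)

theorem IsOpen.exists_range_cat01_subset {U : Set (ℕ → Bool)} (hU : IsOpen U) (hne : U.Nonempty) :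
    ∃ l, range (cat01 l) ⊆ U := by
  obtain ⟨_, ⟨x, m, rfl⟩, -, hsub⟩ :=
    (PiNat.isTopologicalBasis_cylinders fun _ => Bool).exists_nonempty_subset hne hU
  exact ⟨_, (PiNat.cylinder_eq_range_cat01 x m).symm.subset.trans hsub⟩

theorem stmt_0_general (s : ℕ → List Bool)
    (hdense : ∀ l : List Bool, ∃ n, l <+: s n)
    (B : Set (ℕ → Bool))
    (hBP : ∃ U : Set (ℕ → Bool), IsOpen U ∧ IsMeagre (symmDiff B U))
    (hB : ¬ IsMeagre B) :
    ∃ x ∈ B, ∃ y ∈ B, (x, y) ∈ G0 s := by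
  obtain ⟨U, hU, hUne, hUB⟩ := exists_isOpen_nonempty_isMeagre_diff hBP hB
  obtain ⟨t, htU⟩ := hU.exists_range_cat01_subset hUne
  obtain ⟨n, htn⟩ := hdense t
  obtain ⟨c, hc⟩ := exists_forall_apply_mem_of_isMeagre_diff (f := fun b => cat01 (s n ++ [b]))
    (fun _ => continuous_cat01 _) (fun _ => isOpenMap_cat01 _)
    (fun _ => (range_cat01_subset_of_prefix (htn.trans (List.prefix_append _ _))).trans htU) hUB
  exact ⟨_, hc false, _, hc true, n, c, rfl⟩

/-- A non-meager subset of Cantor space with the Baire property is not `G₀`-independent. -/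
theorem stmt_0 (s : ℕ → List Bool)
    (hlen : ∀ n, (s n).length = n)
    (hdense : ∀ l : List Bool, ∃ n, l <+: s n)
    (B : Set (ℕ → Bool))
    (hBP : ∃ U : Set (ℕ → Bool), IsOpen U ∧ IsMeagre (symmDiff B U))
    (hB : ¬ IsMeagre B) :
    ∃ x ∈ B, ∃ y ∈ B, (x, y) ∈ G0 s :=
  stmt_0_general s hdense B hBP hB
end

section
/- Let X be a Hausdorff space, G an analytic digraph on X (an irreflexive relation that is analytic as a subset of X × X), and R a reflexive Gδ binary relation on X. Then at least one of the following holds: (1) for every R-clique Y ⊆ X there is a countable coloring of the restriction of G to Y (a function c : Y → ℕ with c(x) ≠ c(y) whenever (x,y) ∈ G and x,y ∈ Y); or (2) there is a continuous map φ : 2^ℕ → X which is a homomorphism from G₀ to G (i.e., (φ(x), φ(y)) ∈ G whenever (x,y) ∈ G₀) and whose image is an R-clique. -/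
open Filter Topology

/-!
Write `G = range F` and let `p : ℕ^ℕ → X` parametrise the vertices of `G` continuously. A
would-be continuous homomorphism `G₀ → G` is coded by `ℕ^ℕ`-codes of its vertices (via `p`) and
edges (via `F`); a level-`n` approximation records finitely much of them, so there are countably
many. Within the clique `Y`, repeatedly delete the root values of the approximations that are
terminal, i.e. have no one-step extension realised over the current set; this transfinite
derivative stabilises at some `S`. If `S` contains a vertex, nothing realised over `S` is terminal,
and a chain of ever longer approximations with `V m`-close vertex codes, where
`R ∩ R⁻¹ = ⋂ m, V m`, converges to a continuous homomorphism with `R`-clique image. Otherwise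
colour each vertex by a terminal approximation deleting it: adjacent vertices of the same colour
would be root values of one terminal approximation, and gluing their configurations along the
edge between them realises a one-step extension.
-/

namespace G0Dichotomy

section Sequences

def IsInitSeg (l : List ℕ) (z : ℕ → ℕ) : Prop := ∀ i (hi : i < l.length), l[i] = z i

def initSeg (m : ℕ) (z : ℕ → ℕ) : List ℕ := List.ofFn fun i : Fin m => z i

variable {l l' : List ℕ} {z z' : ℕ → ℕ}

@[simp] lemma length_initSeg (m : ℕ) (z : ℕ → ℕ) : (initSeg m z).length = m :=
  List.length_ofFn

lemma isInitSeg_initSeg (m : ℕ) (z : ℕ → ℕ) : IsInitSeg (initSeg m z) z := fun _ _ => by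
  simp [initSeg]

lemma isInitSeg_nil (z : ℕ → ℕ) : IsInitSeg [] z := fun _ hi => absurd hi (Nat.not_lt_zero _)

lemma IsInitSeg.eq_initSeg (h : IsInitSeg l z) : l = initSeg l.length z :=
  List.ext_getElem (by simp) fun i hi _ => by simp [h i hi, initSeg]

lemma IsInitSeg.prefix_initSeg {m : ℕ} (h : IsInitSeg l z) (hm : l.length ≤ m) :
    l <+: initSeg m z := by
  rw [h.eq_initSeg, List.prefix_iff_eq_take]
  exact List.ext_getElem (by simp [hm]) fun _ _ _ => by simp [initSeg]

lemma IsInitSeg.apply_eq (h : IsInitSeg l z) (h' : IsInitSeg l z') {i : ℕ}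
    (hi : i < l.length) : z i = z' i :=
  (h i hi).symm.trans (h' i hi)

lemma IsInitSeg.mem_cylinder (h : IsInitSeg l z) (h' : IsInitSeg l z') {m : ℕ}
    (hm : m ≤ l.length) : z' ∈ PiNat.cylinder z m :=
  fun _ hi => h'.apply_eq h (hi.trans_le hm)

lemma prefix_of_le {L : ℕ → List ℕ} (hL : ∀ n, L n <+: L (n + 1)) {m n : ℕ} (h : m ≤ n) :
    L m <+: L n := by
  induction n, h using Nat.le_induction with
  | base => exact List.prefix_refl _
  | succ n _ ih => exact ih.trans (hL n)

/-- The limit of an increasing chain of lists whose `n`-th member has length at least `n`. -/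
def limSeq (L : ℕ → List ℕ) (i : ℕ) : ℕ := (L (i + 1)).getD i 0

lemma isInitSeg_limSeq {L : ℕ → List ℕ} (hL : ∀ n, L n <+: L (n + 1))
    (hlen : ∀ n, n ≤ (L n).length) (n : ℕ) : IsInitSeg (L n) (limSeq L) := by
  intro i hi
  have key : ∀ {m m'}, m ≤ m' → ∀ him : i < (L m).length, (L m)[i] = (L m').getD i 0 :=
    fun h him => by rw [(prefix_of_le hL h).getElem him, List.getD_eq_getElem]
  rcases le_total n (i + 1) with h | h
  · exact key h hi
  · have hi' : i < (L (i + 1)).length := Nat.lt_of_lt_of_le i.lt_succ_self (hlen _)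
    rw [limSeq, List.getD_eq_getElem _ _ hi', key h hi', List.getD_eq_getElem]

lemma tendsto_of_isInitSeg {L : ℕ → List ℕ} {z : ℕ → ℕ → ℕ} {z' : ℕ → ℕ}
    (hlen : ∀ i, ∀ᶠ n in atTop, i < (L n).length) (hz : ∀ᶠ n in atTop, IsInitSeg (L n) (z n))
    (hz' : ∀ n, IsInitSeg (L n) z') : Tendsto z atTop (𝓝 z') := by
  refine tendsto_pi_nhds.2 fun i => tendsto_const_nhds.congr' ?_
  filter_upwards [hlen i, hz] with n hi hn
  exact (hz' n).apply_eq hn hi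

lemma exists_cylinder_subset {U : Set (ℕ → ℕ)} (hU : IsOpen U) {z : ℕ → ℕ} (hz : z ∈ U) :
    ∃ m, PiNat.cylinder z m ⊆ U := by
  obtain ⟨_, ⟨x, m, rfl⟩, hzx, hsub⟩ :=
    (PiNat.isTopologicalBasis_cylinders _).exists_subset_of_mem_open hz hU
  exact ⟨m, PiNat.mem_cylinder_iff_eq.1 hzx ▸ hsub⟩

lemma exists_cylinder_prod_subset {X : Type*} [TopologicalSpace X] {p : (ℕ → ℕ) → X}
    (hp : Continuous p) {W : Set (X × X)} (hW : IsOpen W) {z z' : ℕ → ℕ}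
    (h : (p z, p z') ∈ W) :
    ∃ m, ∀ y ∈ PiNat.cylinder z m, ∀ y' ∈ PiNat.cylinder z' m, (p y, p y') ∈ W := by
  obtain ⟨u, v, hu, hv, hzu, hzv, huv⟩ := isOpen_prod_iff.1 hW _ _ h
  obtain ⟨m, hm⟩ := exists_cylinder_subset (hu.preimage hp) hzu
  obtain ⟨m', hm'⟩ := exists_cylinder_subset (hv.preimage hp) hzv
  exact ⟨max m m', fun y hy y' hy' => huv ⟨hm (PiNat.cylinder_anti _ (le_max_left _ _) hy),
    hm' (PiNat.cylinder_anti _ (le_max_right _ _) hy')⟩⟩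

end Sequences

section BinaryStrings

def trunc (n : ℕ) (t : ℕ → Bool) (i : ℕ) : Bool := if i < n then t i else false

variable {n m i j : ℕ} {t c : ℕ → Bool} {l : List Bool}

lemma trunc_apply_of_lt (h : i < n) : trunc n t i = t i := if_pos h

lemma trunc_trunc (h : n ≤ m) : trunc n (trunc m t) = trunc n t := by
  ext i
  by_cases hi : i < n
  · simp [trunc, hi, hi.trans_le h]
  · simp [trunc, hi]

lemma cat01_apply_of_lt (h : j < l.length) : cat01 l c j = l[j] := dif_pos h

lemma cat01_apply_of_le (h : l.length ≤ j) : cat01 l c j = c (j - l.length) :=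
  dif_neg h.not_gt

lemma cat01_append_apply_length (b : Bool) : cat01 (l ++ [b]) c l.length = b := by
  rw [cat01_apply_of_lt (by simp)]
  simp

lemma trunc_cat01 (h : l.length ≤ n) : trunc n (cat01 l c) = cat01 l (trunc (n - l.length) c) := by
  ext j
  rcases lt_or_ge j l.length with hj | hj
  · rw [trunc_apply_of_lt (hj.trans_le h), cat01_apply_of_lt hj, cat01_apply_of_lt hj]
  · rw [cat01_apply_of_le hj]
    by_cases hjn : j < n
    · rw [trunc_apply_of_lt hjn, trunc_apply_of_lt (by omega), cat01_apply_of_le hj]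
    · simp [trunc, hjn, show ¬ j - l.length < n - l.length by omega]

def rootPoint (l : List Bool) : ℕ → Bool := cat01 l fun _ => false

lemma trunc_cat01_append (b : Bool) (c : ℕ → Bool) :
    trunc l.length (cat01 (l ++ [b]) c) = rootPoint l := by
  ext j
  rcases lt_or_ge j l.length with hj | hj
  · rw [trunc_apply_of_lt hj, rootPoint, cat01_apply_of_lt (by simp; omega), cat01_apply_of_lt hj]
    simp [List.getElem_append_left hj]
  · simp [trunc, rootPoint, cat01_apply_of_le hj, hj.not_gt]

def pad (u : Fin m → Bool) (i : ℕ) : Bool := if h : i < m then u ⟨i, h⟩ else false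

lemma pad_restrict (t : ℕ → Bool) : pad (fun i : Fin m => t i) = trunc m t := by
  ext i
  by_cases hi : i < m <;> simp [pad, trunc, hi]

end BinaryStrings

/-- Codes in `ℕ^ℕ` for the vertices `t ∈ 2^ℕ` (read through `p`) and for the `G₀`-edges
`(k, w)` (read through `F`, where `G = range F`) of a would-be homomorphism `G₀ → G`. -/
structure Config where
  vert : (ℕ → Bool) → ℕ → ℕ
  wit : ℕ → (ℕ → Bool) → ℕ → ℕ

namespace Config

def glue (n : ℕ) (c c' : Config) (z : ℕ → ℕ) : Config where
  vert t := cond (t n) (c'.vert (trunc n t)) (c.vert (trunc n t))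
  wit k w := if k < n then
    cond (w (n - k - 1)) (c'.wit k (trunc (n - k - 1) w)) (c.wit k (trunc (n - k - 1) w))
    else z

variable {n : ℕ} {c c' : Config} {z : ℕ → ℕ}

lemma glue_vert_cat01 {l : List Bool} (h : l.length ≤ n) (w : ℕ → Bool) :
    (c.glue n c' z).vert (cat01 l w) = cond (w (n - l.length))
      (c'.vert (cat01 l (trunc (n - l.length) w))) (c.vert (cat01 l (trunc (n - l.length) w))) := by
  simp only [glue, cat01_apply_of_le h, trunc_cat01 h]

lemma glue_vert_cat01_append (l : List Bool) (b : Bool) (w : ℕ → Bool) :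
    (c.glue l.length c' z).vert (cat01 (l ++ [b]) w) =
      cond b (c'.vert (rootPoint l)) (c.vert (rootPoint l)) := by
  simp only [glue, cat01_append_apply_length, trunc_cat01_append]

lemma glue_wit_of_lt {k : ℕ} (hk : k < n) (w : ℕ → Bool) : (c.glue n c' z).wit k w =
    cond (w (n - k - 1)) (c'.wit k (trunc (n - k - 1) w)) (c.wit k (trunc (n - k - 1) w)) :=
  if_pos hk

lemma glue_wit_self (w : ℕ → Bool) : (c.glue n c' z).wit n w = z := if_neg (lt_irrefl n)

end Config

/-- A level-`n` approximation: finite pieces of the codes of the points indexed by `2^n`, and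
for each `k < n` of the codes of the edges between the pairs indexed by `2^(n - k - 1)`. -/
def Approx (n : ℕ) : Type :=
  ((Fin n → Bool) → List ℕ) × ((k : Fin n) → (Fin (n - k - 1) → Bool) → List ℕ)

instance (n : ℕ) : Countable (Approx n) := by
  unfold Approx
  infer_instance

def Approx.ofConfig (n N : ℕ) (c : Config) : Approx n :=
  (fun u => initSeg N (c.vert (pad u)), fun k u => initSeg N (c.wit k (pad u)))

namespace Approx

variable {n : ℕ}

instance : Inhabited (Approx n) := ⟨(fun _ => [], fun _ _ => [])⟩

def vert (a : Approx n) (t : ℕ → Bool) : List ℕ := a.1 fun i => t i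

def wit (a : Approx n) (k : ℕ) (w : ℕ → Bool) : List ℕ :=
  if h : k < n then a.2 ⟨k, h⟩ (fun i => w i) else []

lemma wit_of_le (a : Approx n) {k : ℕ} (hk : n ≤ k) (w : ℕ → Bool) : a.wit k w = [] :=
  dif_neg hk.not_gt

lemma continuous_getD_vert (a : Approx n) (i : ℕ) :
    Continuous fun t : ℕ → Bool => (a.vert t).getD i 0 :=
  (continuous_of_discreteTopology (f := fun u : Fin n → Bool => (a.1 u).getD i 0)).comp
    (continuous_pi fun j => continuous_apply (j : ℕ))

/-- `a` at level `n + 1`, ignoring the last coordinate. -/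
def lift (a : Approx n) : Approx (n + 1) :=
  (fun u => a.1 fun i => u i.castSucc, fun k w =>
    if h : (k : ℕ) < n then
      a.2 ⟨k, h⟩ fun i => w ⟨i, by have : (i : ℕ) < n - k - 1 := i.2; omega⟩
    else [])

@[simp] lemma vert_lift (a : Approx n) (t : ℕ → Bool) : a.lift.vert t = a.vert t := rfl

@[simp] lemma wit_lift (a : Approx n) (k : ℕ) (w : ℕ → Bool) : a.lift.wit k w = a.wit k w := by
  unfold wit lift
  split_ifs <;> first | rfl | omega | simp_all

def IsPrefix {m : ℕ} (a : Approx m) (b : Approx n) : Prop :=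
  (∀ t, a.vert t <+: b.vert t) ∧ ∀ k w, a.wit k w <+: b.wit k w

lemma IsPrefix.trans {m m' : ℕ} {a : Approx m} {b : Approx m'} {c : Approx n}
    (hab : a.IsPrefix b) (hbc : b.IsPrefix c) : a.IsPrefix c :=
  ⟨fun t => (hab.1 t).trans (hbc.1 t), fun k w => (hab.2 k w).trans (hbc.2 k w)⟩

lemma isPrefix_lift (a : Approx n) : a.IsPrefix a.lift :=
  ⟨fun _ => List.prefix_refl _, fun k w => by rw [wit_lift]⟩

def Compatible (a : Approx n) (c : Config) : Prop :=
  (∀ t, IsInitSeg (a.vert t) (c.vert (trunc n t))) ∧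
    ∀ k w, IsInitSeg (a.wit k w) (c.wit k (trunc (n - k - 1) w))

variable {N : ℕ} {c : Config}

lemma vert_ofConfig (t : ℕ → Bool) :
    (ofConfig n N c).vert t = initSeg N (c.vert (trunc n t)) := by
  simp only [vert, ofConfig, pad_restrict]

lemma wit_ofConfig {k : ℕ} (hk : k < n) (w : ℕ → Bool) :
    (ofConfig n N c).wit k w = initSeg N (c.wit k (trunc (n - k - 1) w)) := by
  simp only [wit, ofConfig, dif_pos hk, pad_restrict]

lemma compatible_ofConfig : (ofConfig n N c).Compatible c := by
  refine ⟨fun t => ?_, fun k w => ?_⟩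
  · rw [vert_ofConfig]
    exact isInitSeg_initSeg _ _
  · rcases lt_or_ge k n with hk | hk
    · rw [wit_ofConfig hk]
      exact isInitSeg_initSeg _ _
    · rw [wit_of_le _ hk]
      exact isInitSeg_nil _

lemma exists_length_le (a : Approx n) :
    ∃ N, (∀ t, (a.vert t).length ≤ N) ∧ ∀ k w, (a.wit k w).length ≤ N := by
  obtain ⟨N, hN⟩ := Finite.bddAbove_range fun u => (a.1 u).length
  obtain ⟨N', hN'⟩ := Finite.bddAbove_range
    fun q : (k : Fin n) × (Fin (n - k - 1) → Bool) => (a.2 q.1 q.2).length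
  refine ⟨max N N', fun t => le_max_of_le_left (hN ⟨_, rfl⟩), fun k w => ?_⟩
  unfold wit
  split_ifs with hk
  · exact le_max_of_le_right (hN' ⟨⟨⟨k, hk⟩, _⟩, rfl⟩)
  · exact Nat.zero_le _

lemma isPrefix_ofConfig {a : Approx n} (hac : a.Compatible c) (hN : ∀ t, (a.vert t).length ≤ N)
    (hN' : ∀ k w, (a.wit k w).length ≤ N) : a.IsPrefix (ofConfig n N c) := by
  refine ⟨fun t => ?_, fun k w => ?_⟩
  · rw [vert_ofConfig]
    exact (hac.1 t).prefix_initSeg (hN t)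
  · rcases lt_or_ge k n with hk | hk
    · rw [wit_ofConfig hk]
      exact (hac.2 k w).prefix_initSeg (hN' k w)
    · rw [a.wit_of_le hk]
      exact List.nil_prefix

end Approx

section Derivative

variable {X : Type*} (s : ℕ → List Bool) (F : (ℕ → ℕ) → X × X) (p : (ℕ → ℕ) → X)

structure IsConfig (B : Set X) (n : ℕ) (c : Config) : Prop where
  map_edge : ∀ k < n, ∀ w, F (c.wit k w) =
    (p (c.vert (cat01 (s k ++ [false]) w)), p (c.vert (cat01 (s k ++ [true]) w)))
  mem : ∀ t, p (c.vert t) ∈ B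

def IsTerminal (B : Set X) {n : ℕ} (a : Approx n) : Prop :=
  ∀ (b : Approx (n + 1)) (c : Config), a.IsPrefix b → IsConfig s F p B (n + 1) c →
    ¬ b.Compatible c

def rootValues (B : Set X) {n : ℕ} (a : Approx n) : Set X :=
  {x | ∃ c, IsConfig s F p B n c ∧ a.Compatible c ∧ p (c.vert (rootPoint (s n))) = x}

def derivative (B : Set X) : Set X :=
  B \ ⋃ (n : ℕ) (a : Approx n) (_ : IsTerminal s F p B a), rootValues s F p B a

variable {s F p} {B B' : Set X} {n : ℕ}

lemma IsConfig.mono (h : B ⊆ B') {c : Config} (hc : IsConfig s F p B n c) :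
    IsConfig s F p B' n c :=
  ⟨hc.map_edge, fun t => h (hc.mem t)⟩

lemma rootValues_mono (h : B ⊆ B') (a : Approx n) :
    rootValues s F p B a ⊆ rootValues s F p B' a := by
  rintro x ⟨c, hc, hac, rfl⟩
  exact ⟨c, hc.mono h, hac, rfl⟩

lemma derivative_subset (B : Set X) : derivative s F p B ⊆ B := Set.sdiff_subset

lemma isConfig_glue (hs : ∀ k, (s k).length = k) {c c' : Config} (hc : IsConfig s F p B n c)
    (hc' : IsConfig s F p B n c') {z : ℕ → ℕ}
    (hz : F z = (p (c.vert (rootPoint (s n))), p (c'.vert (rootPoint (s n))))) :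
    IsConfig s F p B (n + 1) (c.glue n c' z) := by
  refine ⟨fun k hk w => ?_, fun t => ?_⟩
  · rcases Nat.lt_succ_iff_lt_or_eq.1 hk with hk | rfl
    · have hl : ∀ b : Bool, (s k ++ [b]).length ≤ n := fun b => by simp [hs]; omega
      have hw : ∀ b : Bool, n - (s k ++ [b]).length = n - k - 1 := fun b => by simp [hs]; omega
      simp only [Config.glue_vert_cat01 (hl _), hw, Config.glue_wit_of_lt hk]
      cases w (n - k - 1)
      exacts [hc.map_edge k hk _, hc'.map_edge k hk _]
    · have := @Config.glue_vert_cat01_append c c' z (s k)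
      simp only [hs] at this
      simpa only [this, Config.glue_wit_self, cond_false, cond_true] using hz
  · simp only [Config.glue]
    cases t n
    exacts [hc.mem _, hc'.mem _]

lemma compatible_glue {a : Approx n} {c c' : Config} (hc : a.Compatible c)
    (hc' : a.Compatible c') (z : ℕ → ℕ) : a.lift.Compatible (c.glue n c' z) := by
  refine ⟨fun t => ?_, fun k w => ?_⟩
  · simp only [Approx.vert_lift, Config.glue, trunc_apply_of_lt (Nat.lt_succ_self n),
      trunc_trunc (Nat.le_succ n)]
    cases t n
    exacts [hc.1 t, hc'.1 t]
  · rw [Approx.wit_lift]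
    rcases lt_or_ge k n with hk | hk
    · rw [show n + 1 - k - 1 = n - k by omega, Config.glue_wit_of_lt hk,
        trunc_apply_of_lt (by omega), trunc_trunc (by omega)]
      cases w (n - k - 1)
      exacts [hc.2 k w, hc'.2 k w]
    · rw [a.wit_of_le hk]
      exact isInitSeg_nil _

/-- Otherwise the two configurations witnessing the root values glue to one compatible with a
one-step extension of `a`. -/
lemma not_mem_range_of_isTerminal (hs : ∀ k, (s k).length = k) {a : Approx n}
    (ha : IsTerminal s F p B a) {x y : X} (hx : x ∈ rootValues s F p B a)
    (hy : y ∈ rootValues s F p B a) : (x, y) ∉ Set.range F := by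
  rintro ⟨z, hz⟩
  obtain ⟨c, hc, hac, rfl⟩ := hx
  obtain ⟨c', hc', hac', rfl⟩ := hy
  exact ha _ _ a.isPrefix_lift (isConfig_glue hs hc hc' hz) (compatible_glue hac hac' z)

lemma not_isTerminal_of_derivative_eq {S : Set X} (hS : derivative s F p S = S) {a : Approx n}
    {c : Config} (hc : IsConfig s F p S n c) (hac : a.Compatible c) : ¬ IsTerminal s F p S a := by
  intro ha
  have hroot := hc.mem (rootPoint (s n))
  rw [← hS] at hroot
  exact hroot.2 (Set.mem_iUnion.2 ⟨n, Set.mem_iUnion₂.2 ⟨a, ha, c, hc, hac, rfl⟩⟩)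

end Derivative

section Iteration

universe u

variable {X : Type u} (s : ℕ → List Bool) (F : (ℕ → ℕ) → X × X) (p : (ℕ → ℕ) → X)
  (Y : Set X)

noncomputable def derivIter : Ordinal.{u} → Set X :=
  Ordinal.lt_wf.fix fun o ih => derivative s F p (Y ∩ ⋂ (o' : Ordinal) (h : o' < o), ih o' h)

def derivIterLT (o : Ordinal.{u}) : Set X := Y ∩ ⋂ o' < o, derivIter s F p Y o'

lemma derivIter_eq (o : Ordinal.{u}) :
    derivIter s F p Y o = derivative s F p (derivIterLT s F p Y o) :=
  Ordinal.lt_wf.fix_eq _ o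

lemma derivIter_subset (o : Ordinal.{u}) : derivIter s F p Y o ⊆ Y := by
  rw [derivIter_eq]
  exact (derivative_subset _).trans Set.inter_subset_left

lemma derivIter_subset_of_lt {o o' : Ordinal.{u}} (h : o < o') :
    derivIter s F p Y o' ⊆ derivIter s F p Y o := by
  rw [derivIter_eq]
  exact (derivative_subset _).trans
    (Set.inter_subset_right.trans (Set.biInter_subset_of_mem (t := derivIter s F p Y) h))

lemma derivIter_antitone : Antitone (derivIter s F p Y) := fun _ _ h =>
  h.eq_or_lt.elim (fun h => h ▸ subset_rfl) (derivIter_subset_of_lt s F p Y)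

lemma derivIterLT_antitone : Antitone (derivIterLT s F p Y) := fun _ _ h _ hx =>
  ⟨hx.1, Set.mem_iInter₂.2 fun o h' => Set.mem_iInter₂.1 hx.2 o (h'.trans_le h)⟩

lemma derivIter_succ (o : Ordinal.{u}) :
    derivIter s F p Y (Order.succ o) = derivative s F p (derivIter s F p Y o) := by
  rw [derivIter_eq]
  congr 1
  refine subset_antisymm (Set.inter_subset_right.trans
    (Set.biInter_subset_of_mem (t := derivIter s F p Y) (Order.lt_succ o))) fun x hx => ?_
  exact ⟨derivIter_subset s F p Y o hx, Set.mem_iInter₂.2 fun o' h' =>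
    derivIter_antitone s F p Y (Order.lt_succ_iff.1 h') hx⟩

/-- The derivative sequence is antitone, so it would be injective if it never stabilized. -/
lemma exists_derivative_derivIter_eq :
    ∃ o, derivative s F p (derivIter s F p Y o) = derivIter s F p Y o := by
  by_contra! h
  refine not_injective_of_ordinal (derivIter s F p Y) fun o o' he => ?_
  by_contra hne
  wlog hlt : o < o' generalizing o o'
  · exact this o' o he.symm (Ne.symm hne) ((not_lt.1 hlt).lt_of_ne (Ne.symm hne))
  refine h o (subset_antisymm (derivative_subset _) ?_)
  rw [← derivIter_succ, he]
  exact derivIter_antitone s F p Y (Order.succ_le_of_lt hlt)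

variable {s F p Y}

lemma exists_isTerminal_of_not_mem {x : X} (hxY : x ∈ Y) {o : Ordinal.{u}}
    (hx : x ∉ derivIter s F p Y o) : ∃ o' n, ∃ a : Approx n,
      IsTerminal s F p (derivIterLT s F p Y o') a ∧
        x ∈ rootValues s F p (derivIterLT s F p Y o') a := by
  obtain ⟨o', ho', hmin⟩ := Ordinal.lt_wf.has_min {o | x ∉ derivIter s F p Y o} ⟨o, hx⟩
  have hxB : x ∈ derivIterLT s F p Y o' :=
    ⟨hxY, Set.mem_iInter₂.2 fun o'' h => not_not.1 fun hx'' => hmin o'' hx'' h⟩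
  rw [Set.mem_ofPred_eq, derivIter_eq, derivative, Set.mem_sdiff, not_and, not_not] at ho'
  exact ⟨o', by simpa only [Set.mem_iUnion, exists_prop] using ho' hxB⟩

end Iteration

section Coloring

universe u

variable {X : Type u} {s : ℕ → List Bool} {F : (ℕ → ℕ) → X × X} {p : (ℕ → ℕ) → X}

lemma exists_coloring (hs : ∀ k, (s k).length = k) (Y : Set X) (o : Ordinal.{u}) :
    ∃ col : X → Σ n, Approx n, ∀ x ∈ Y \ derivIter s F p Y o, ∀ y ∈ Y \ derivIter s F p Y o,
      (x, y) ∈ Set.range F → col x ≠ col y := by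
  choose! o' n a ha hxa using fun x (hx : x ∈ Y \ derivIter s F p Y o) =>
    exists_isTerminal_of_not_mem hx.1 hx.2
  refine ⟨fun x => ⟨n x, a x⟩,
    fun x hx y hy hxy (hc : (⟨n x, a x⟩ : Σ n, Approx n) = ⟨n y, a y⟩) => ?_⟩
  -- stated through the pairs `⟨n x, a x⟩` so that `hc` can transport them across levels
  have hx' : IsTerminal s F p (derivIterLT s F p Y (o' x)) (⟨n x, a x⟩ : Σ n, Approx n).2 ∧
      x ∈ rootValues s F p (derivIterLT s F p Y (o' x)) (⟨n x, a x⟩ : Σ n, Approx n).2 :=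
    ⟨ha x hx, hxa x hx⟩
  have hy' : IsTerminal s F p (derivIterLT s F p Y (o' y)) (⟨n y, a y⟩ : Σ n, Approx n).2 ∧
      y ∈ rootValues s F p (derivIterLT s F p Y (o' y)) (⟨n y, a y⟩ : Σ n, Approx n).2 :=
    ⟨ha y hy, hxa y hy⟩
  rw [hc] at hx'
  rcases le_total (o' x) (o' y) with h | h
  · exact not_mem_range_of_isTerminal hs hx'.1 hx'.2
      (rootValues_mono (derivIterLT_antitone s F p Y h) _ hy'.2) hxy
  · exact not_mem_range_of_isTerminal hs hy'.1
      (rootValues_mono (derivIterLT_antitone s F p Y h) _ hx'.2) hy'.2 hxy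

end Coloring

section Homomorphism

variable {X : Type*} [TopologicalSpace X] {s : ℕ → List Bool} {F : (ℕ → ℕ) → X × X}
  {p : (ℕ → ℕ) → X}

structure IsFine (p : (ℕ → ℕ) → X) (W : Set (X × X)) {n : ℕ} (a : Approx n) : Prop where
  length_vert : ∀ t, n ≤ (a.vert t).length
  length_wit : ∀ k < n, ∀ w, n ≤ (a.wit k w).length
  mem : ∀ t t' z z', IsInitSeg (a.vert t) z → IsInitSeg (a.vert t') z' → (p z, p z') ∈ W

variable {S : Set X} {W : Set (X × X)} {n : ℕ}

lemma exists_cylinder_bound (hp : Continuous p) (hW : IsOpen W) (hSW : S ×ˢ S ⊆ W)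
    {c : Config} (hc : ∀ t, p (c.vert t) ∈ S) (n : ℕ) :
    ∃ N, ∀ t t', ∀ y ∈ PiNat.cylinder (c.vert (trunc n t)) N,
      ∀ y' ∈ PiNat.cylinder (c.vert (trunc n t')) N, (p y, p y') ∈ W := by
  choose m hm using fun u u' : Fin n → Bool =>
    exists_cylinder_prod_subset hp hW (hSW ⟨hc (pad u), hc (pad u')⟩)
  obtain ⟨N, hN⟩ := Finite.bddAbove_range fun q : (Fin n → Bool) × (Fin n → Bool) => m q.1 q.2
  refine ⟨N, fun t t' y hy y' hy' => ?_⟩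
  have hmN := hN ⟨((fun i => t i), fun i => t' i), rfl⟩
  have := hm (fun i => t i) (fun i => t' i)
  rw [pad_restrict, pad_restrict] at this
  exact this y (PiNat.cylinder_anti _ hmN hy) y' (PiNat.cylinder_anti _ hmN hy')

lemma exists_isFine_isPrefix (hp : Continuous p) (hW : IsOpen W) (hSW : S ×ˢ S ⊆ W)
    {c : Config} (hc : IsConfig s F p S n c) {a : Approx n} (hac : a.Compatible c) :
    ∃ b : Approx n, a.IsPrefix b ∧ b.Compatible c ∧ IsFine p W b := by
  obtain ⟨N, hN, hN'⟩ := a.exists_length_le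
  obtain ⟨N', hN''⟩ := exists_cylinder_bound hp hW hSW hc.mem n
  refine ⟨.ofConfig n (max n (max N N')) c, Approx.isPrefix_ofConfig hac
    (fun t => (hN t).trans (by omega)) (fun k w => (hN' k w).trans (by omega)),
    Approx.compatible_ofConfig, ⟨fun t => ?_, fun k hk w => ?_, fun t t' z z' hz hz' => ?_⟩⟩
  · simp [Approx.vert_ofConfig]
  · simp [Approx.wit_ofConfig hk]
  · rw [Approx.vert_ofConfig] at hz hz'
    exact hN'' t t' z ((isInitSeg_initSeg _ _).mem_cylinder hz (by simp))
      z' ((isInitSeg_initSeg _ _).mem_cylinder hz' (by simp))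

lemma exists_isFine_extension (hp : Continuous p) (hS : derivative s F p S = S) (hW : IsOpen W)
    (hSW : S ×ˢ S ⊆ W) {c : Config} (hc : IsConfig s F p S n c) {a : Approx n}
    (hac : a.Compatible c) : ∃ (b : Approx (n + 1)) (c' : Config),
      a.IsPrefix b ∧ IsConfig s F p S (n + 1) c' ∧ b.Compatible c' ∧ IsFine p W b := by
  have := not_isTerminal_of_derivative_eq hS hc hac
  simp only [IsTerminal, not_forall, not_not] at this
  obtain ⟨b, c', hab, hc', hbc'⟩ := this
  obtain ⟨b', hbb', hb'c', hb'⟩ := exists_isFine_isPrefix hp hW hSW hc' hbc'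
  exact ⟨b', c', hab.trans hbb', hc', hb'c', hb'⟩

end Homomorphism

section Chain

variable {X : Type*} (s : ℕ → List Bool) (F : (ℕ → ℕ) → X × X)
  (p : (ℕ → ℕ) → X)

structure IsFineChain (S : Set X) (V : ℕ → Set (X × X)) (A : (n : ℕ) → Approx n)
    (C : ℕ → Config) : Prop where
  isConfig : ∀ n, IsConfig s F p S n (C n)
  compatible : ∀ n, (A n).Compatible (C n)
  isPrefix : ∀ n, (A n).IsPrefix (A (n + 1))
  isFine : ∀ n, IsFine p (V n) (A (n + 1))

variable {s F p} {S : Set X} {V : ℕ → Set (X × X)}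

lemma exists_isFineChain [TopologicalSpace X] (hp : Continuous p) (hS : derivative s F p S = S)
    (hV : ∀ m, IsOpen (V m)) (hSV : ∀ m, S ×ˢ S ⊆ V m) (hne : (S ∩ Set.range p).Nonempty) :
    ∃ A C, IsFineChain s F p S V A C := by
  obtain ⟨_, hz, z, rfl⟩ := hne
  let Good (n : ℕ) (q : Approx n × Config) : Prop := IsConfig s F p S n q.2 ∧ q.1.Compatible q.2
  have base : Good 0 (default, ⟨fun _ => z, fun _ _ => z⟩) :=
    ⟨⟨fun k hk => absurd hk k.not_lt_zero, fun _ => hz⟩, fun _ => isInitSeg_nil _,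
      fun k _ => (Approx.wit_of_le _ k.zero_le _).symm ▸ isInitSeg_nil _⟩
  have step (n : ℕ) (q : {q // Good n q}) :
      ∃ q' : {q' // Good (n + 1) q'}, q.1.1.IsPrefix q'.1.1 ∧ IsFine p (V n) q'.1.1 := by
    obtain ⟨b, c', hab, hc', hbc', hb⟩ := exists_isFine_extension hp hS (hV n) (hSV n) q.2.1 q.2.2
    exact ⟨⟨(b, c'), hc', hbc'⟩, hab, hb⟩
  choose next hnext using step
  let g (n : ℕ) : {q // Good n q} := Nat.rec ⟨_, base⟩ next n
  exact ⟨fun n => (g n).1.1, fun n => (g n).1.2, fun n => (g n).2.1, fun n => (g n).2.2,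
    fun n => (hnext n (g n)).1, fun n => (hnext n (g n)).2⟩

def vertLimit (A : (n : ℕ) → Approx n) (t : ℕ → Bool) : ℕ → ℕ :=
  limSeq fun n => (A (n + 1)).vert t

lemma continuous_vertLimit (A : (n : ℕ) → Approx n) : Continuous (vertLimit A) :=
  continuous_pi fun i => (A (i + 1 + 1)).continuous_getD_vert i

namespace IsFineChain

variable {A : (n : ℕ) → Approx n} {C : ℕ → Config} (h : IsFineChain s F p S V A C)
include h

lemma isInitSeg_vertLimit (n : ℕ) (t : ℕ → Bool) :
    IsInitSeg ((A (n + 1)).vert t) (vertLimit A t) :=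
  isInitSeg_limSeq (fun n => (h.isPrefix (n + 1)).1 t)
    (fun n => (Nat.le_succ n).trans ((h.isFine n).length_vert t)) n

lemma tendsto_vert (t : ℕ → Bool) :
    Tendsto (fun n => (C (n + 1)).vert (trunc (n + 1) t)) atTop (𝓝 (vertLimit A t)) :=
  tendsto_of_isInitSeg (fun i => eventually_atTop.2 ⟨i, fun n hn =>
      (Nat.lt_succ_of_le hn).trans_le ((h.isFine n).length_vert t)⟩)
    (.of_forall fun n => (h.compatible (n + 1)).1 t) (h.isInitSeg_vertLimit · t)

lemma exists_tendsto_wit (k : ℕ) (w : ℕ → Bool) :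
    ∃ ζ, Tendsto (fun n => (C (n + k + 1)).wit k (trunc n w)) atTop (𝓝 ζ) := by
  have hlen (n : ℕ) : n ≤ ((A (n + k + 1)).wit k w).length :=
    (by omega : n ≤ n + k + 1).trans ((h.isFine (n + k)).length_wit k (by omega) w)
  have hinit := isInitSeg_limSeq (fun n => by
    rw [show n + 1 + k + 1 = n + k + 1 + 1 by omega]
    exact (h.isPrefix (n + k + 1)).2 k w) hlen
  refine ⟨_, tendsto_of_isInitSeg (fun i => eventually_atTop.2 ⟨i + 1, fun n hn =>
      (by omega : i < n).trans_le (hlen n)⟩) (.of_forall fun n => ?_) hinit⟩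
  simpa only [show n + k + 1 - k - 1 = n by omega] using (h.compatible (n + k + 1)).2 k w

lemma mem_range_of_mem_G0 [TopologicalSpace X] [T2Space X] (hs : ∀ k, (s k).length = k)
    (hF : Continuous F) (hp : Continuous p) {q : (ℕ → Bool) × (ℕ → Bool)} (hq : q ∈ G0 s) :
    (p (vertLimit A q.1), p (vertLimit A q.2)) ∈ Set.range F := by
  obtain ⟨k, w, rfl⟩ := hq
  obtain ⟨ζ, hζ⟩ := h.exists_tendsto_wit k w
  have hvert (b : Bool) :
      Tendsto (fun n => p ((C (n + k + 1)).vert (cat01 (s k ++ [b]) (trunc n w)))) atTop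
        (𝓝 (p (vertLimit A (cat01 (s k ++ [b]) w)))) := by
    refine ((hp.tendsto _).comp ((h.tendsto_vert _).comp (tendsto_add_atTop_nat k))).congr
      fun n => ?_
    simp only [Function.comp_apply]
    rw [trunc_cat01 (by simp [hs]), show n + k + 1 - (s k ++ [b]).length = n by simp [hs]]
  refine ⟨ζ, tendsto_nhds_unique ((hF.tendsto ζ).comp hζ)
    (((hvert false).prodMk_nhds (hvert true)).congr fun n => ?_)⟩
  exact ((h.isConfig (n + k + 1)).map_edge k (by omega) (trunc n w)).symm

lemma mem_of_vertLimit (m : ℕ) (t t' : ℕ → Bool) :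
    (p (vertLimit A t), p (vertLimit A t')) ∈ V m :=
  (h.isFine m).mem t t' _ _ (h.isInitSeg_vertLimit m t) (h.isInitSeg_vertLimit m t')

end IsFineChain

lemma exists_continuous_hom [TopologicalSpace X] [T2Space X] (hs : ∀ k, (s k).length = k)
    (hF : Continuous F) (hp : Continuous p) (hS : derivative s F p S = S)
    (hV : ∀ m, IsOpen (V m)) (hSV : ∀ m, S ×ˢ S ⊆ V m) (hne : (S ∩ Set.range p).Nonempty) :
    ∃ φ : (ℕ → Bool) → X, Continuous φ ∧ (∀ q ∈ G0 s, (φ q.1, φ q.2) ∈ Set.range F) ∧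
      ∀ t t' m, (φ t, φ t') ∈ V m := by
  obtain ⟨A, C, h⟩ := exists_isFineChain hp hS hV hSV hne
  exact ⟨fun t => p (vertLimit A t), hp.comp (continuous_vertLimit A),
    fun _ hq => h.mem_range_of_mem_G0 hs hF hp hq, fun t t' m => h.mem_of_vertLimit m t t'⟩

end Chain

lemma exists_continuous_range_eq_of_analyticSet {α : Type*} [TopologicalSpace α] {A : Set α}
    (hA : MeasureTheory.AnalyticSet A) (hne : A.Nonempty) :
    ∃ f : (ℕ → ℕ) → α, Continuous f ∧ Set.range f = A := by
  rw [MeasureTheory.AnalyticSet] at hA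
  exact hA.resolve_left hne.ne_empty

lemma exists_continuous_vertices {X : Type*} [TopologicalSpace X] {F : (ℕ → ℕ) → X × X}
    (hF : Continuous F) :
    ∃ p : (ℕ → ℕ) → X, Continuous p ∧
      ∀ q ∈ Set.range F, q.1 ∈ Set.range p ∧ q.2 ∈ Set.range p := by
  have hA : MeasureTheory.AnalyticSet (Set.range (Prod.fst ∘ F) ∪ Set.range (Prod.snd ∘ F)) := by
    rw [Set.union_eq_iUnion]
    refine MeasureTheory.AnalyticSet.iUnion fun b => ?_
    cases b <;> exact MeasureTheory.analyticSet_range_of_polishSpace (by fun_prop)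
  obtain ⟨p, hp, hrange⟩ := exists_continuous_range_eq_of_analyticSet hA ⟨(F 0).1, Or.inl ⟨0, rfl⟩⟩
  refine ⟨p, hp, ?_⟩
  rintro _ ⟨z, rfl⟩
  exact ⟨hrange ▸ Or.inl ⟨z, rfl⟩, hrange ▸ Or.inr ⟨z, rfl⟩⟩

end G0Dichotomy

open G0Dichotomy in
theorem stmt_2_general {X : Type*} [TopologicalSpace X] [T2Space X]
    (s : ℕ → List Bool)
    (hlen : ∀ n, (s n).length = n)
    (G : Set (X × X))
    (hGanal : MeasureTheory.AnalyticSet G)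
    (R : Set (X × X)) (hRrefl : ∀ x : X, (x, x) ∈ R) (hRGδ : IsGδ R) :
    (∀ Y : Set X, (∀ x ∈ Y, ∀ y ∈ Y, x ≠ y → (x, y) ∈ R) →
      ∃ c : Y → ℕ, ∀ x y : Y, ((x : X), (y : X)) ∈ G → c x ≠ c y) ∨
    (∃ φ : (ℕ → Bool) → X, Continuous φ ∧
      (∀ p ∈ G0 s, (φ p.1, φ p.2) ∈ G) ∧
      (∀ x ∈ Set.range φ, ∀ y ∈ Set.range φ, x ≠ y → (x, y) ∈ R)) := by
  rcases G.eq_empty_or_nonempty with rfl | hG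
  · exact .inl fun Y _ => ⟨fun _ => 0, fun _ _ h => h.elim⟩
  obtain ⟨F, hF, rfl⟩ := exists_continuous_range_eq_of_analyticSet hGanal hG
  obtain ⟨p, hp, hpF⟩ := exists_continuous_vertices hF
  obtain ⟨V, hV, hRV⟩ := (hRGδ.inter (hRGδ.preimage continuous_swap)).eq_iInter_nat
  refine or_iff_not_imp_right.2 fun hno Y hY => ?_
  have hYR : ∀ x ∈ Y, ∀ y ∈ Y, (x, y) ∈ R := fun x hx y hy =>
    (eq_or_ne x y).elim (fun h => h ▸ hRrefl x) (hY x hx y hy)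
  have hYV (m : ℕ) : Y ×ˢ Y ⊆ V m := fun q hq =>
    Set.mem_iInter.1 (hRV ▸ ⟨hYR _ hq.1 _ hq.2, hYR _ hq.2 _ hq.1⟩) m
  obtain ⟨o, ho⟩ := exists_derivative_derivIter_eq s F p Y
  by_cases hS : (derivIter s F p Y o ∩ Set.range p).Nonempty
  · have hSV (m : ℕ) := (Set.prod_mono (derivIter_subset s F p Y o)
      (derivIter_subset s F p Y o)).trans (hYV m)
    obtain ⟨φ, hφ, hφG, hφV⟩ := exists_continuous_hom hlen hF hp ho hV hSV hS
    refine (hno ⟨φ, hφ, hφG, ?_⟩).elim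
    rintro _ ⟨t, rfl⟩ _ ⟨t', rfl⟩ -
    exact (hRV ▸ Set.mem_iInter.2 (hφV t t') : _ ∈ R ∩ _).1
  · obtain ⟨col, hcol⟩ := exists_coloring hlen Y o
    obtain ⟨e, he⟩ := Countable.exists_injective_nat (Σ n, Approx n)
    have hout {x : X} (hx : x ∈ Set.range p) : x ∉ derivIter s F p Y o := fun h => hS ⟨x, h, hx⟩
    exact ⟨fun x => e (col x), fun x y hxy hc => hcol x ⟨x.2, hout (hpF _ hxy).1⟩
      y ⟨y.2, hout (hpF _ hxy).2⟩ hxy (he hc)⟩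

/-- The `G₀`-dichotomy within cliques. -/
theorem stmt_2 {X : Type*} [TopologicalSpace X] [T2Space X]
    (s : ℕ → List Bool)
    (hlen : ∀ n, (s n).length = n)
    (hdense : ∀ l : List Bool, ∃ n, l <+: s n)
    (G : Set (X × X)) (hGirr : ∀ x : X, (x, x) ∉ G)
    (hGanal : MeasureTheory.AnalyticSet G)
    (R : Set (X × X)) (hRrefl : ∀ x : X, (x, x) ∈ R) (hRGδ : IsGδ R) :
    (∀ Y : Set X, (∀ x ∈ Y, ∀ y ∈ Y, x ≠ y → (x, y) ∈ R) →
      ∃ c : Y → ℕ, ∀ x y : Y, ((x : X), (y : X)) ∈ G → c x ≠ c y) ∨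
    (∃ φ : (ℕ → Bool) → X, Continuous φ ∧
      (∀ p ∈ G0 s, (φ p.1, φ p.2) ∈ G) ∧
      (∀ x ∈ Set.range φ, ∀ y ∈ Set.range φ, x ≠ y → (x, y) ∈ R)) :=
  stmt_2_general s hlen G hGanal R hRrefl hRGδ
end

section
/- Every Li–Yorke chaotic Polish dynamical system admits a scrambled Cantor set: if (X, f) is a dynamical system on a Polish metric space X with an uncountable scrambled set, then there exists a Cantor set C ⊆ X that is scrambled. -/
/-!
`limsupEdist f x y = limsup d(fⁿx, fⁿy)` is a pseudo-emetric, positive between distinct points of a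
scrambled set. In a pseudo-emetric space, an uncountable set whose distinct points are at positive
distance contains two uncountable subsets at positive distance from each other: either it has an
uncountable `ε`-separated subset, which we cut in two, or it is separable and has two distinct
condensation points, whose small balls will do. Iterating this splitting inside uncountable cores
of points of `Y` produces a Cantor scheme of shrinking closed balls of `X` centred in `Y`. By
continuity of the iterates, the radius at level `n + 1` can be chosen so small that any two balls
inherit from their centres a time `m ≥ n` at which their images are `2⁻ⁿ`-close, and another at
which they are farther apart than half the (truncated) limsup distance of the centres; along two
branches the latter is bounded below by the separation of the cores where the branches split.
-/

open Filter Topology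

/-- `x` and `y` are proximal under `f`. -/
def Proximal {X : Type*} [MetricSpace X] (f : X → X) (x y : X) : Prop :=
  Filter.liminf (fun n => edist (f^[n] x) (f^[n] y)) Filter.atTop = 0

/-- `x` and `y` are asymptotic under `f`. -/
def Asymptotic {X : Type*} [MetricSpace X] (f : X → X) (x y : X) : Prop :=
  Filter.limsup (fun n => edist (f^[n] x) (f^[n] y)) Filter.atTop = 0

/-- A set is scrambled if all pairs of distinct points in it are Li–Yorke. -/
def Scrambled {X : Type*} [MetricSpace X] (f : X → X) (Y : Set X) : Prop :=
  ∀ x ∈ Y, ∀ y ∈ Y, x ≠ y → Proximal f x y ∧ ¬ Asymptotic f x y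

open Set Metric
open scoped ENNReal Cardinal

section Condensation

variable {α : Type*} [TopologicalSpace α] [HereditarilyLindelofSpace α]

theorem countable_setOf_exists_nhds_inter_countable (S : Set α) :
    {x ∈ S | ∃ U ∈ 𝓝 x, (S ∩ U).Countable}.Countable := by
  set T := {x ∈ S | ∃ U ∈ 𝓝 x, (S ∩ U).Countable}
  choose! U hU hUc using fun x (hx : x ∈ T) => hx.2
  obtain ⟨t, htc, htT, hTt⟩ := (HereditarilyLindelofSpace.isLindelof T).elim_nhds_subcover U hU
  refine (htc.biUnion fun x hx => hUc x (htT x hx)).mono fun y hy => ?_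
  obtain ⟨x, hx, hyx⟩ := mem_iUnion₂.1 (hTt hy)
  exact mem_biUnion hx ⟨hy.1, hyx⟩

theorem not_countable_setOf_forall_nhds_inter_not_countable {S : Set α} (hS : ¬S.Countable) :
    ¬{x ∈ S | ∀ U ∈ 𝓝 x, ¬(S ∩ U).Countable}.Countable := fun h =>
  hS <| (h.union (countable_setOf_exists_nhds_inter_countable S)).mono fun x hx => by
    by_cases H : ∀ U ∈ 𝓝 x, ¬(S ∩ U).Countable
    · exact Or.inl ⟨hx, H⟩
    · exact Or.inr ⟨hx, by simpa using H⟩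

theorem exists_mem_forall_nhds_inter_not_countable {S : Set α} (hS : ¬S.Countable) :
    ∃ x ∈ S, ∀ U ∈ 𝓝 x, ¬(S ∩ U).Countable := by
  obtain ⟨x, hxS, hx⟩ : {x ∈ S | ∀ U ∈ 𝓝 x, ¬(S ∩ U).Countable}.Nonempty :=
    nonempty_iff_ne_empty.2 fun h =>
      not_countable_setOf_forall_nhds_inter_not_countable hS (h ▸ countable_empty)
  exact ⟨x, hxS, hx⟩

end Condensation

theorem Set.exists_disjoint_not_countable {α : Type*} {S : Set α} (hS : ¬S.Countable) :
    ∃ A ⊆ S, ∃ B ⊆ S, Disjoint A B ∧ ¬A.Countable ∧ ¬B.Countable := by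
  have hS' : ℵ₀ ≤ Cardinal.mk S :=
    (not_le.1 fun h => hS (countable_coe_iff.1 (Cardinal.mk_le_aleph0_iff.1 h))).le
  obtain ⟨e⟩ : Nonempty (S ⊕ S ≃ S) :=
    Cardinal.eq.1 (by rw [Cardinal.mk_sum, Cardinal.lift_id, Cardinal.add_eq_self hS'])
  have hrange : ∀ g : S → S ⊕ S, g.Injective → ¬(range fun x => (e (g x) : α)).Countable := by
    intro g hg hc
    have := hc.to_subtype
    refine hS (countable_coe_iff.1 (Function.Injective.countable
      (f := fun x : S => (⟨_, mem_range_self x⟩ : range fun x => (e (g x) : α))) fun x y hxy => ?_))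
    exact hg (e.injective (Subtype.ext (congrArg Subtype.val hxy :)))
  refine ⟨_, ?_, _, ?_, ?_, hrange _ Sum.inl_injective, hrange _ Sum.inr_injective⟩
  · rintro _ ⟨x, rfl⟩; exact Subtype.prop _
  · rintro _ ⟨x, rfl⟩; exact Subtype.prop _
  · rw [Set.disjoint_left]
    rintro _ ⟨x, rfl⟩ ⟨y, hy⟩
    exact Sum.inr_ne_inl (e.injective (Subtype.ext hy))

section PseudoEMetric

variable {α : Type*} [PseudoEMetricSpace α]

theorem exists_not_countable_isSeparated_or_isSeparable (S : Set α) :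
    (∃ ε ≠ 0, ∃ T ⊆ S, ¬T.Countable ∧ IsSeparated ε T) ∨
      TopologicalSpace.IsSeparable S := by
  refine or_iff_not_imp_left.2 fun h => ?_
  obtain ⟨t, -, htc, hSt⟩ := EMetric.subset_countable_closure_of_almost_dense_set S fun ε hε => by
    obtain ⟨r, hr0, hrε⟩ := ENNReal.lt_iff_exists_nnreal_btwn.1 hε
    obtain ⟨N, hN⟩ := zorn_subset {N | N ⊆ S ∧ IsSeparated r N} fun c hcS hc =>
      ⟨⋃₀ c, ⟨sUnion_subset fun N hN => (hcS hN).1,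
        (pairwise_sUnion hc.directedOn).2 fun N hN => (hcS hN).2⟩,
        fun _ => subset_sUnion_of_mem⟩
    refine ⟨N, not_not.1 fun hNc => h ⟨r, hr0.ne', N, hN.prop.1, hNc, hN.prop.2⟩, ?_⟩
    have hcover := isCover_iff_subset_iUnion_closedEBall.1 (IsCover.of_maximal_isSeparated hN)
    exact hcover.trans (iUnion₂_mono fun x _ => closedEBall_subset_closedEBall hrε.le)
  exact ⟨t, htc, hSt⟩

theorem Metric.areSeparated_eball_eball {x y : α} (h : edist x y ≠ 0) :
    ∃ δ, 0 < δ ∧ AreSeparated (eball x δ) (eball y δ) := by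
  set δ := min (edist x y) 1 / 3
  have hδ : 0 < δ := ENNReal.div_pos (by simp [h]) (by norm_num)
  have h3δ : δ + δ + δ ≤ edist x y := (ENNReal.add_thirds _).trans_le (min_le_left _ _)
  refine ⟨δ, hδ, δ, hδ.ne', fun a ha b hb => not_lt.1 fun hab => ?_⟩
  have := calc edist x y ≤ edist x a + edist a b + edist b y := edist_triangle4 _ _ _ _
    _ < δ + δ + δ := by
        rw [mem_eball'] at ha; rw [mem_eball] at hb
        exact ENNReal.add_lt_add (ENNReal.add_lt_add ha hab) hb
  exact this.not_ge h3δ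

theorem exists_not_countable_areSeparated {S : Set α} (hS : ¬S.Countable)
    (hS0 : S.Pairwise fun x y => edist x y ≠ 0) :
    ∃ A ⊆ S, ∃ B ⊆ S, ¬A.Countable ∧ ¬B.Countable ∧ AreSeparated A B := by
  rcases exists_not_countable_isSeparated_or_isSeparable S with ⟨ε, hε, T, hTS, hT, hTsep⟩ | hsep
  · obtain ⟨A, hAT, B, hBT, hAB, hA, hB⟩ := exists_disjoint_not_countable hT
    exact ⟨A, hAT.trans hTS, B, hBT.trans hTS, hA, hB, ε, hε,
      fun a ha b hb => (hTsep (hAT ha) (hBT hb) (hAB.ne_of_mem ha hb)).le⟩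
  have := hsep.secondCountableTopology
  have hU : ¬(univ : Set S).Countable := fun h => hS (countable_coe_iff.1 (countable_univ_iff.1 h))
  obtain ⟨p, ⟨-, hp⟩, q, ⟨-, hq⟩, hpq⟩ := not_subsingleton_iff.1 fun h =>
    not_countable_setOf_forall_nhds_inter_not_countable hU h.finite.countable
  obtain ⟨δ, hδ, r, hr, hball⟩ := areSeparated_eball_eball (x := p) (y := q)
    (hS0 p.2 q.2 (Subtype.coe_injective.ne hpq))
  have himage : ∀ z : S, (∀ U ∈ 𝓝 z, ¬(univ ∩ U).Countable) →
      ¬(Subtype.val '' eball z δ).Countable := fun z hz hc =>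
    hz _ (eball_mem_nhds z hδ)
      ((countable_of_injective_of_countable_image Subtype.val_injective.injOn hc).mono
        inter_subset_right)
  refine ⟨_, Subtype.coe_image_subset _ _, _, Subtype.coe_image_subset _ _, himage p hp,
    himage q hq, r, hr, ?_⟩
  rintro _ ⟨a, ha, rfl⟩ _ ⟨b, hb, rfl⟩
  exact hball a ha b hb

end PseudoEMetric

theorem eventually_forall_closedBall_edist_mem {X Z : Type*} [PseudoMetricSpace X]
    [PseudoEMetricSpace Z] {g : X → Z} (hg : Continuous g) {V : Set ℝ≥0∞} (hV : IsOpen V)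
    {x y : X} (hxy : edist (g x) (g y) ∈ V) :
    ∀ᶠ r in 𝓝 (0 : ℝ), ∀ x' ∈ closedBall x r, ∀ y' ∈ closedBall y r, edist (g x') (g y') ∈ V := by
  have hU : {p : X × X | edist (g p.1) (g p.2) ∈ V} ∈ 𝓝 (x, y) :=
    (hV.preimage (by fun_prop)).mem_nhds hxy
  filter_upwards [eventually_closedBall_subset hU] with r hr x' hx' y' hy'
  exact hr (closedBall_prod_same x y r ▸ mk_mem_prod hx' hy')

namespace CantorScheme

theorem vanishingDiam_closedBall {β α : Type*} [PseudoMetricSpace α] (c : List β → α) {r : ℕ → ℝ}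
    (hr : Tendsto r atTop (𝓝 0)) : VanishingDiam fun l => closedBall (c l) (r l.length) := by
  intro x
  have h2r : Tendsto (fun n => ENNReal.ofReal (2 * r n)) atTop (𝓝 0) := by
    simpa using ENNReal.tendsto_ofReal (hr.const_mul 2)
  refine tendsto_of_tendsto_of_tendsto_of_le_of_le tendsto_const_nhds h2r (fun _ => zero_le)
    fun n => ediam_le_of_forall_dist_le fun y hy z hz => ?_
  simp only [PiNat.res_length, mem_closedBall] at hy hz
  linarith [dist_triangle_right y z (c (PiNat.res x n))]

theorem exists_isEmbedding {α : Type*} [MetricSpace α] [CompleteSpace α] {A : List Bool → Set α}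
    (hanti : CantorScheme.Antitone A) (hclosed : ∀ l, IsClosed (A l)) (hne : ∀ l, (A l).Nonempty)
    (hdisj : CantorScheme.Disjoint A) (hdiam : VanishingDiam A) :
    ∃ e : (ℕ → Bool) → α, IsEmbedding e ∧ ∀ x n, e x ∈ A (PiNat.res x n) := by
  have hdom := (hanti.closureAntitone hclosed).map_of_vanishingDiam hdiam hne
  let e : (ℕ → Bool) → α := fun x => (inducedMap A).2 ⟨x, hdom ▸ mem_univ x⟩
  have he : Continuous e := hdiam.map_continuous.comp (continuous_id.subtype_mk _)
  refine ⟨e, (he.isClosedEmbedding fun x y h => ?_).isEmbedding, fun x n => map_mem _ n⟩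
  exact congrArg Subtype.val (hdisj.map_injective h)

end CantorScheme

section Dynamics

variable {X : Type*} [MetricSpace X] {f : X → X} {x y : X}

noncomputable def limsupEdist (f : X → X) (x y : X) : ℝ≥0∞ :=
  limsup (fun n => edist (f^[n] x) (f^[n] y)) atTop

theorem asymptotic_iff_limsupEdist_eq_zero : Asymptotic f x y ↔ limsupEdist f x y = 0 := Iff.rfl

theorem limsupEdist_triangle (f : X → X) (x y z : X) :
    limsupEdist f x z ≤ limsupEdist f x y + limsupEdist f y z := by
  refine ENNReal.le_of_forall_pos_le_add fun ε hε hlt => ?_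
  have hε2 : (ε : ℝ≥0∞) / 2 ≠ 0 := by simpa using hε.ne'
  have hlt' (a : ℝ≥0∞) (ha : a ≠ ⊤) : a < a + ε / 2 := ENNReal.lt_add_right ha hε2
  calc limsupEdist f x z
      ≤ (limsupEdist f x y + ε / 2) + (limsupEdist f y z + ε / 2) := by
        refine limsup_le_of_le (by isBoundedDefault) ?_
        filter_upwards [eventually_lt_of_limsup_lt (hlt' _ (ENNReal.add_lt_top.1 hlt).1.ne),
          eventually_lt_of_limsup_lt (hlt' _ (ENNReal.add_lt_top.1 hlt).2.ne)] with n hn hn'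
        exact (edist_triangle _ (f^[n] y) _).trans (add_le_add hn.le hn'.le)
    _ = limsupEdist f x y + limsupEdist f y z + ε := by
        rw [add_add_add_comm, ENNReal.add_halves]

/-- A type synonym, so that Mathlib's pseudo-emetric API applies to `limsupEdist f`. -/
def LimsupDist (_f : X → X) : Type _ := X

noncomputable instance (f : X → X) : PseudoEMetricSpace (LimsupDist f) where
  edist := limsupEdist (X := X) f
  edist_self x := by simp [limsupEdist]
  edist_comm x y := by simp only [limsupEdist, edist_comm]
  edist_triangle := limsupEdist_triangle (X := X) f

theorem proximal_iff_frequently_edist_lt :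
    Proximal f x y ↔ ∀ ε > 0, ∃ᶠ n in atTop, edist (f^[n] x) (f^[n] y) < ε := by
  refine ⟨fun h ε hε => frequently_lt_of_liminf_lt (by isBoundedDefault) (h.symm ▸ hε), fun h => ?_⟩
  refine le_antisymm (le_of_forall_gt_imp_ge_of_dense fun ε hε => ?_) zero_le
  exact liminf_le_of_frequently_le' ((h ε hε).mono fun _ => le_of_lt)

theorem not_asymptotic_of_frequently_lt_edist {δ : ℝ≥0∞} (hδ : δ ≠ 0)
    (h : ∃ᶠ n in atTop, δ < edist (f^[n] x) (f^[n] y)) : ¬Asymptotic f x y := fun h0 =>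
  hδ (le_zero_iff.1 (h0 ▸ le_limsup_of_frequently_le' (h.mono fun _ => le_of_lt)))

theorem frequently_min_one_half_lt_edist (h : ¬Asymptotic f x y) :
    ∃ᶠ n in atTop, min 1 (limsupEdist f x y) / 2 < edist (f^[n] x) (f^[n] y) := by
  refine frequently_lt_of_lt_limsup (by isBoundedDefault) ?_
  have h0 : min 1 (limsupEdist f x y) ≠ 0 := by simpa [← asymptotic_iff_limsupEdist_eq_zero] using h
  have htop : min 1 (limsupEdist f x y) ≠ ⊤ :=
    ne_top_of_le_ne_top ENNReal.one_ne_top (min_le_left _ _)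
  exact (ENNReal.half_lt_self h0 htop).trans_le (min_le_right _ _)

theorem eventually_exists_iterate_edist_mem (hf : Continuous f) {V : Set ℝ≥0∞} (hV : IsOpen V)
    (h : ∃ᶠ m in atTop, edist (f^[m] x) (f^[m] y) ∈ V) (n : ℕ) :
    ∀ᶠ r in 𝓝 (0 : ℝ), ∃ m ≥ n, ∀ x' ∈ closedBall x r, ∀ y' ∈ closedBall y r,
      edist (f^[m] x') (f^[m] y') ∈ V := by
  obtain ⟨m, hmn, hm⟩ := frequently_atTop.1 h n
  exact (eventually_forall_closedBall_edist_mem (hf.iterate m) hV hm).mono fun r hr => ⟨m, hmn, hr⟩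

end Dynamics

theorem exists_split_family {α : Type*} [PseudoEMetricSpace α] {n : ℕ}
    {Q : List.Vector Bool n → Set α} (hQ : ∀ w, ¬(Q w).Countable)
    (hQ0 : ∀ w, (Q w).Pairwise fun x y => edist x y ≠ 0)
    (hsep : Pairwise fun w w' => AreSeparated (Q w) (Q w')) :
    ∃ P : List.Vector Bool (n + 1) → Set α, (∀ σ, P σ ⊆ Q σ.tail) ∧ (∀ σ, ¬(P σ).Countable) ∧
      Pairwise fun σ τ => AreSeparated (P σ) (P τ) := by
  choose A hAQ B hBQ hA hB hAB using fun w => exists_not_countable_areSeparated (hQ w) (hQ0 w)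
  have hP : ∀ b w, (bif b then A w else B w) ⊆ Q w ∧ ¬(bif b then A w else B w).Countable := by
    rintro (_ | _) w
    exacts [⟨hBQ w, hB w⟩, ⟨hAQ w, hA w⟩]
  refine ⟨fun σ => bif σ.head then A σ.tail else B σ.tail, fun σ => (hP _ _).1,
    fun σ => (hP _ _).2, fun σ τ hστ => ?_⟩
  by_cases htail : σ.tail = τ.tail
  · have hhead : σ.head ≠ τ.head := fun h =>
      hστ (by rw [← σ.cons_head_tail, ← τ.cons_head_tail, h, htail])
    dsimp only
    rw [htail]
    generalize σ.head = b, τ.head = b' at hhead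
    cases b <;> cases b' <;> simp only [ne_eq, not_true_eq_false] at hhead
    exacts [(hAB _).symm, hAB _]
  · exact (hsep htail).mono (hP _ _).1 (hP _ _).1

/-- Level `n` of the Cantor scheme; the centres of level `n + 1` are chosen in the cores. -/
structure SchemeLevel (X : Type*) (n : ℕ) where
  center : List.Vector Bool n → X
  core : List.Vector Bool n → Set X
  radius : ℝ

namespace SchemeLevel

variable {X : Type*} [MetricSpace X] {f : X → X} {Y : Set X} {n : ℕ}

structure IsAdmissible (L : SchemeLevel X n) (f : X → X) (Y : Set X) : Prop where
  radius_pos : 0 < L.radius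
  center_mem : ∀ w, L.center w ∈ L.core w
  core_subset : ∀ w, L.core w ⊆ Y ∩ ball (L.center w) L.radius
  not_countable_core : ∀ w, ¬(L.core w).Countable
  areSeparated_core :
    Pairwise fun w w' => AreSeparated (X := LimsupDist f) (L.core w) (L.core w')

structure Refines (L : SchemeLevel X n) (f : X → X) (L' : SchemeLevel X (n + 1)) : Prop where
  closedBall_subset :
    ∀ w, closedBall (L'.center w) L'.radius ⊆ closedBall (L.center w.tail) L.radius
  core_subset : ∀ w, L'.core w ⊆ L.core w.tail
  radius_le : L'.radius ≤ 2⁻¹ ^ (n + 1)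
  disjoint : Pairwise fun w w' =>
    Disjoint (closedBall (L'.center w) L'.radius) (closedBall (L'.center w') L'.radius)
  exists_iterate_edist_lt : ∀ w w', w ≠ w' → ∃ m ≥ n,
    ∀ x ∈ closedBall (L'.center w) L'.radius, ∀ y ∈ closedBall (L'.center w') L'.radius,
      edist (f^[m] x) (f^[m] y) < 2⁻¹ ^ n
  -- `min 1` keeps the threshold finite, hence strictly below a positive `limsupEdist`.
  exists_iterate_lt_edist : ∀ w w', w ≠ w' → ∃ m ≥ n,
    ∀ x ∈ closedBall (L'.center w) L'.radius, ∀ y ∈ closedBall (L'.center w') L'.radius,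
      min 1 (limsupEdist f (L'.center w) (L'.center w')) / 2 < edist (f^[m] x) (f^[m] y)

theorem exists_isAdmissible_zero [SecondCountableTopology X] (hYunc : ¬Y.Countable) :
    ∃ L : SchemeLevel X 0, L.IsAdmissible f Y := by
  obtain ⟨p, hp, hpY⟩ := exists_mem_forall_nhds_inter_not_countable hYunc
  exact ⟨⟨fun _ => p, fun _ => Y ∩ ball p 1, 1⟩, one_pos, fun _ => ⟨hp, mem_ball_self one_pos⟩,
    fun _ => subset_rfl, fun _ => hpY _ (ball_mem_nhds p one_pos), Subsingleton.pairwise⟩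

theorem isAdmissible_of_condensation {L : SchemeLevel X n} (hL : L.IsAdmissible f Y)
    {c : List.Vector Bool (n + 1) → X} {P : List.Vector Bool (n + 1) → Set X}
    (hcP : ∀ σ, c σ ∈ P σ) (hP : ∀ σ, P σ ⊆ L.core σ.tail)
    (hPsep : Pairwise fun σ τ => AreSeparated (X := LimsupDist f) (P σ) (P τ))
    (hc : ∀ σ, ∀ U ∈ 𝓝 (c σ), ¬(P σ ∩ U).Countable) {r : ℝ} (hr : 0 < r) :
    IsAdmissible ⟨c, fun σ => P σ ∩ ball (c σ) r, r⟩ f Y where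
  radius_pos := hr
  center_mem σ := ⟨hcP σ, mem_ball_self hr⟩
  core_subset σ _ hx := ⟨(hL.core_subset _ (hP σ hx.1)).1, hx.2⟩
  not_countable_core σ := hc σ _ (ball_mem_nhds _ hr)
  areSeparated_core _ _ h := (hPsep h).mono inter_subset_left inter_subset_left

theorem eventually_refines (hf : Continuous f) (hY : Scrambled f Y) {L : SchemeLevel X n}
    (hL : L.IsAdmissible f Y) {c : List.Vector Bool (n + 1) → X}
    {P : List.Vector Bool (n + 1) → Set X}
    (hcP : ∀ σ, c σ ∈ P σ) (hP : ∀ σ, P σ ⊆ L.core σ.tail)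
    (hPsep : Pairwise fun σ τ => AreSeparated (X := LimsupDist f) (P σ) (P τ)) :
    ∀ᶠ r in 𝓝 (0 : ℝ), L.Refines f ⟨c, fun σ => P σ ∩ ball (c σ) r, r⟩ := by
  have hcL σ : c σ ∈ Y ∩ ball (L.center σ.tail) L.radius := hL.core_subset _ (hP σ (hcP σ))
  have hcne : Pairwise fun σ τ => c σ ≠ c τ := fun σ τ h =>
    (hPsep h).disjoint.ne_of_mem (hcP σ) (hcP τ)
  have hLY : Pairwise fun σ τ => Proximal f (c σ) (c τ) ∧ ¬Asymptotic f (c σ) (c τ) :=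
    fun σ τ h => hY _ (hcL σ).1 _ (hcL τ).1 (hcne h)
  have hpairs {p : ℝ → List.Vector Bool (n + 1) → List.Vector Bool (n + 1) → Prop}
      (h : ∀ σ τ, σ ≠ τ → ∀ᶠ r in 𝓝 (0 : ℝ), p r σ τ) :
      ∀ᶠ r in 𝓝 (0 : ℝ), ∀ σ τ, σ ≠ τ → p r σ τ :=
    eventually_all.2 fun σ => eventually_all.2 fun τ => eventually_imp_distrib_left.2 (h σ τ)
  have hsub :
      ∀ᶠ r in 𝓝 (0 : ℝ), ∀ σ, closedBall (c σ) r ⊆ closedBall (L.center σ.tail) L.radius :=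
    eventually_all.2 fun σ => (eventually_closedBall_subset (isOpen_ball.mem_nhds (hcL σ).2)).mono
      fun r hr => hr.trans ball_subset_closedBall
  have hdisj := hpairs fun σ τ h => (eventually_forall_closedBall_edist_mem (g := id)
    (x := c σ) (y := c τ) continuous_id isOpen_Ioi (edist_pos.2 (hcne h))).mono fun r hr =>
      disjoint_left.2 fun z hz hz' => (hr z hz z hz').ne' (edist_self z)
  have hprox := hpairs fun σ τ h => eventually_exists_iterate_edist_mem hf isOpen_Iio
    (proximal_iff_frequently_edist_lt.1 (hLY h).1 (2⁻¹ ^ n) (ENNReal.pow_pos (by norm_num) n)) n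
  have hfar := hpairs fun σ τ h => eventually_exists_iterate_edist_mem hf isOpen_Ioi
    (frequently_min_one_half_lt_edist (hLY h).2) n
  filter_upwards [hsub, eventually_le_nhds (by positivity : (0 : ℝ) < 2⁻¹ ^ (n + 1)), hdisj, hprox,
    hfar] with r hsub hr hdisj hprox hfar
  exact ⟨hsub, fun σ => inter_subset_left.trans (hP σ), hr, hdisj, hprox, hfar⟩

theorem exists_refinement [SecondCountableTopology X] (hf : Continuous f) (hY : Scrambled f Y)
    {L : SchemeLevel X n} (hL : L.IsAdmissible f Y) :
    ∃ L' : SchemeLevel X (n + 1), L'.IsAdmissible f Y ∧ L.Refines f L' := by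
  obtain ⟨P, hP, hPc, hPsep⟩ := exists_split_family (α := LimsupDist f) hL.not_countable_core
    (fun w u hu v hv huv => (hY u (hL.core_subset w hu).1 v (hL.core_subset w hv).1 huv).2)
    hL.areSeparated_core
  -- condensation points for the topology of `X`, not that of `LimsupDist f`
  choose c hcP hc using fun σ => exists_mem_forall_nhds_inter_not_countable (α := X) (hPc σ)
  obtain ⟨r, hr, hr0⟩ := (((eventually_refines hf hY hL hcP hP hPsep).filter_mono
    nhdsWithin_le_nhds).and (self_mem_nhdsWithin (s := Ioi 0))).exists
  exact ⟨_, isAdmissible_of_condensation hL hcP hP hPsep hc hr0, hr⟩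

theorem exists_seq_isAdmissible_refines [SecondCountableTopology X] (hf : Continuous f)
    (hYunc : ¬Y.Countable) (hY : Scrambled f Y) :
    ∃ L : (n : ℕ) → SchemeLevel X n, ∀ n, (L n).IsAdmissible f Y ∧ (L n).Refines f (L (n + 1)) := by
  obtain ⟨L₀, hL₀⟩ := exists_isAdmissible_zero (f := f) hYunc
  choose step hstep using fun n (L : {L : SchemeLevel X n // L.IsAdmissible f Y}) =>
    exists_refinement hf hY L.2
  let L : (n : ℕ) → {L : SchemeLevel X n // L.IsAdmissible f Y} :=
    fun n => Nat.rec ⟨L₀, hL₀⟩ (fun n L => ⟨step n L, (hstep n L).1⟩) n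
  exact ⟨fun n => (L n).1, fun n => ⟨(L n).2, (hstep n (L n)).2⟩⟩

end SchemeLevel

theorem frequently_atTop_of_eventually_exists_ge {p : ℕ → Prop}
    (h : ∀ᶠ n in atTop, ∃ m ≥ n, p m) : ∃ᶠ m in atTop, p m :=
  frequently_atTop.2 fun N =>
    let ⟨_, ⟨m, hmn, hm⟩, hNn⟩ := (h.and (eventually_ge_atTop N)).exists
    ⟨m, hNn.trans hmn, hm⟩

/-- Since `PiNat.res a n = [a (n - 1), …, a 0]`, the newest letter is the head:
`(branch a (n + 1)).tail = branch a n`. -/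
def branch (a : ℕ → Bool) (n : ℕ) : List.Vector Bool n :=
  ⟨PiNat.res a n, PiNat.res_length a n⟩

theorem eventually_branch_ne {a b : ℕ → Bool} (h : a ≠ b) :
    ∀ᶠ n in atTop, branch a n ≠ branch b n := by
  obtain ⟨i, hi⟩ := Function.ne_iff.1 h
  filter_upwards [eventually_gt_atTop i] with n hn heq
  exact hi (PiNat.res_eq_res.1 (congrArg Subtype.val heq) hn)

namespace SchemeLevel

variable {X : Type*} [MetricSpace X] {f : X → X} {Y : Set X} {L : (n : ℕ) → SchemeLevel X n}
  (hL : ∀ n, (L n).IsAdmissible f Y ∧ (L n).Refines f (L (n + 1)))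
include hL

theorem antitone_core_branch (a : ℕ → Bool) : Antitone fun n => (L n).core (branch a n) :=
  antitone_nat_of_succ_le fun n => (hL n).2.core_subset (branch a (n + 1))

theorem exists_isEmbedding_forall_mem_closedBall [CompleteSpace X] :
    ∃ e : (ℕ → Bool) → X, IsEmbedding e ∧
      ∀ a n, e a ∈ closedBall ((L n).center (branch a n)) (L n).radius := by
  let A : List Bool → Set X :=
    fun l => closedBall ((L l.length).center ⟨l, rfl⟩) (L l.length).radius
  have hA n (w : List.Vector Bool n) : A w.1 = closedBall ((L n).center w) (L n).radius := by
    obtain ⟨l, rfl⟩ := w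
    rfl
  have hr : Tendsto (fun n => (L n).radius) atTop (𝓝 0) := by
    refine (tendsto_add_atTop_iff_nat 1).1 (squeeze_zero (fun n => (hL _).1.radius_pos.le)
      (fun n => (hL n).2.radius_le) ?_)
    exact (tendsto_pow_atTop_nhds_zero_of_lt_one (by norm_num) (by norm_num)).comp
      (tendsto_add_atTop_nat 1)
  obtain ⟨e, he, hmem⟩ := CantorScheme.exists_isEmbedding (A := A)
    (fun l b => (hL _).2.closedBall_subset ⟨b :: l, rfl⟩) (fun _ => isClosed_closedBall)
    (fun _ => nonempty_closedBall.2 (hL _).1.radius_pos.le)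
    (fun l b b' hbb' => (hL _).2.disjoint fun h =>
      hbb' (List.head_eq_of_cons_eq (congrArg Subtype.val h)))
    (CantorScheme.vanishingDiam_closedBall (r := fun n => (L n).radius) _ hr)
  exact ⟨e, he, fun a n => hA n (branch a n) ▸ hmem a n⟩

variable {a b : ℕ → Bool} (hab : a ≠ b) {x y : X}
  (hx : ∀ n, x ∈ closedBall ((L n).center (branch a n)) (L n).radius)
  (hy : ∀ n, y ∈ closedBall ((L n).center (branch b n)) (L n).radius)
include hab hx hy

theorem proximal_of_forall_mem_closedBall : Proximal f x y := by
  refine proximal_iff_frequently_edist_lt.2 fun ε hε => frequently_atTop_of_eventually_exists_ge ?_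
  obtain ⟨k, hk⟩ := ENNReal.exists_inv_two_pow_lt hε.ne'
  filter_upwards [(tendsto_add_atTop_nat 1).eventually (eventually_branch_ne hab),
    eventually_ge_atTop k] with n hne hkn
  obtain ⟨m, hmn, hm⟩ := (hL n).2.exists_iterate_edist_lt _ _ hne
  exact ⟨m, hmn, (hm x (hx _) y (hy _)).trans_le
    ((pow_le_pow_right_of_le_one' (by norm_num) hkn).trans hk.le)⟩

theorem not_asymptotic_of_forall_mem_closedBall : ¬Asymptotic f x y := by
  obtain ⟨N, hN⟩ := eventually_atTop.1 (eventually_branch_ne hab)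
  obtain ⟨r, hr0, hr⟩ := (hL N).1.areSeparated_core (hN N le_rfl)
  refine not_asymptotic_of_frequently_lt_edist (δ := min 1 r / 2) (by simpa using hr0)
    (frequently_atTop_of_eventually_exists_ge ?_)
  filter_upwards [eventually_ge_atTop N] with n hn
  obtain ⟨m, hmn, hm⟩ := (hL n).2.exists_iterate_lt_edist _ _ (hN (n + 1) (by omega))
  refine ⟨m, hmn, lt_of_le_of_lt ?_ (hm x (hx _) y (hy _))⟩
  have hcore c := antitone_core_branch hL c (show N ≤ n + 1 by omega)
  gcongr
  exact hr _ (hcore a ((hL _).1.center_mem _)) _ (hcore b ((hL _).1.center_mem _))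

end SchemeLevel

/-- Every Li–Yorke chaotic Polish dynamical system has a scrambled Cantor set. -/
theorem stmt_4 {X : Type*} [MetricSpace X] [TopologicalSpace.SeparableSpace X]
    [CompleteSpace X]
    (f : X → X) (hf : Continuous f)
    (Y : Set X) (hYunc : ¬ Y.Countable) (hY : Scrambled f Y) :
    ∃ C : Set X, Nonempty ((ℕ → Bool) ≃ₜ C) ∧ Scrambled f C := by
  obtain ⟨L, hL⟩ := SchemeLevel.exists_seq_isAdmissible_refines hf hYunc hY
  obtain ⟨e, he, hmem⟩ := SchemeLevel.exists_isEmbedding_forall_mem_closedBall hL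
  refine ⟨range e, ⟨he.toHomeomorph⟩, ?_⟩
  rintro _ ⟨a, rfl⟩ _ ⟨b, rfl⟩ hne
  have hab : a ≠ b := ne_of_apply_ne e hne
  exact ⟨SchemeLevel.proximal_of_forall_mem_closedBall hL hab (hmem a) (hmem b),
    SchemeLevel.not_asymptotic_of_forall_mem_closedBall hL hab (hmem a) (hmem b)⟩
end

section
/- Let F be a meager equivalence relation on Cantor space 2^ℕ (meager as a subset of 2^ℕ × 2^ℕ). Then there is a continuous injection ψ : 2^ℕ → 2^ℕ sending distinct points to F-inequivalent points; in particular, F has a perfect partial transversal. -/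
/-!
Fix a decreasing sequence of dense open sets `D n` whose intersection avoids `F`. Attach to every
binary string `v` of length `n` a cylinder `C v` of Cantor space, refining along extensions, such
that `C v ×ˢ C w ⊆ D n` whenever `v ≠ w` have length `n + 1`: at each level there are only finitely
many pairs, and a dense open set meets every product of cylinders in a smaller product of
cylinders. A branch `x` determines the point `ψ x` of the nested cylinders; two branches that
split are sent into every `D n`, hence to `F`-inequivalent points. Reflexivity of `F` makes `ψ`
injective, and a continuous injection of Cantor space has perfect range.
-/

open Filter Topology Set Function

namespace PiNat

variable {E : ℕ → Type*}

theorem cylinder_subset_of_mem {x y : ∀ n, E n} {m n : ℕ} (hy : y ∈ cylinder x m)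
    (hmn : m ≤ n) : cylinder y n ⊆ cylinder x m :=
  (cylinder_anti y hmn).trans (mem_cylinder_iff_eq.1 hy).subset

variable [∀ n, TopologicalSpace (E n)] [∀ n, DiscreteTopology (E n)]

theorem hasBasis_nhds_cylinder (x : ∀ n, E n) :
    (𝓝 x).HasBasis (fun _ => True) (cylinder x) := by
  refine ⟨fun s => ⟨fun hs => ?_, fun ⟨n, _, hn⟩ =>
    mem_of_superset ((isOpen_cylinder E x n).mem_nhds (self_mem_cylinder x n)) hn⟩⟩
  obtain ⟨_, ⟨y, n, rfl⟩, hxy, hs⟩ := (isTopologicalBasis_cylinders E).mem_nhds_iff.1 hs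
  exact ⟨n, trivial, mem_cylinder_iff_eq.1 hxy ▸ hs⟩

theorem hasBasis_nhds_prod_cylinder (x y : ∀ n, E n) :
    (𝓝 (x, y)).HasBasis (fun _ => True) fun n => cylinder x n ×ˢ cylinder y n := by
  rw [nhds_prod_eq]
  exact (hasBasis_nhds_cylinder x).prod_same_index_anti (hasBasis_nhds_cylinder y)
    (fun _ _ _ _ => cylinder_anti x) fun _ _ _ _ => cylinder_anti y

theorem exists_cylinder_prod_subset {D : Set ((∀ n, E n) × (∀ n, E n))} (hDo : IsOpen D)
    (hDd : Dense D) (x y : ∀ n, E n) (m : ℕ) :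
    ∃ x' ∈ cylinder x m, ∃ y' ∈ cylinder y m, ∃ n, cylinder x' n ×ˢ cylinder y' n ⊆ D := by
  obtain ⟨⟨x', y'⟩, ⟨hx', hy'⟩, hD⟩ := hDd.inter_open_nonempty _
    ((isOpen_cylinder E x m).prod (isOpen_cylinder E y m))
    ⟨(x, y), self_mem_cylinder x m, self_mem_cylinder y m⟩
  obtain ⟨n, -, hn⟩ := (hasBasis_nhds_prod_cylinder x' y').mem_iff.1 (hDo.mem_nhds hD)
  exact ⟨x', hx', y', hy', n, hn⟩

theorem exists_forall_mem_finset_cylinder_prod_subset {T : Type*}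
    {D : Set ((∀ n, E n) × (∀ n, E n))} (hDo : IsOpen D) (hDd : Dense D) (S : Finset (T × T))
    (x : T → ∀ n, E n) (m : ℕ) :
    ∃ n, m < n ∧ ∃ x' : T → ∀ n, E n, (∀ t, x' t ∈ cylinder (x t) m) ∧
      ∀ st ∈ S, st.1 ≠ st.2 → cylinder (x' st.1) n ×ˢ cylinder (x' st.2) n ⊆ D := by
  classical
  induction S using Finset.induction_on generalizing x m with
  | empty => exact ⟨m + 1, m.lt_succ_self, x, fun t => self_mem_cylinder _ _, by simp⟩
  | insert st S _ ih =>
    obtain ⟨s, t⟩ := st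
    by_cases hst : s = t
    · obtain ⟨n, hmn, x', hx', hD⟩ := ih x m
      exact ⟨n, hmn, x', hx', by simpa [hst] using hD⟩
    obtain ⟨a, ha, b, hb, k, hk⟩ := exists_cylinder_prod_subset hDo hDd (x s) (x t) m
    set x₁ := update (update x s a) t b
    have hx₁s : x₁ s = a := by simp [x₁, hst]
    have hx₁t : x₁ t = b := by simp [x₁]
    have hx₁ : ∀ r, x₁ r ∈ cylinder (x r) m := by
      intro r
      simp only [x₁, update_apply]
      split_ifs with hrt hrs
      · exact hrt ▸ hb
      · exact hrs ▸ ha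
      · exact self_mem_cylinder _ _
    obtain ⟨n, hn, x', hx', hD⟩ := ih x₁ (max m k)
    have hsub : ∀ r, cylinder (x' r) n ⊆ cylinder (x₁ r) (max m k) :=
      fun r => cylinder_subset_of_mem (hx' r) hn.le
    refine ⟨n, (le_max_left m k).trans_lt hn, x',
      fun r => cylinder_subset_of_mem (hx₁ r) le_rfl (cylinder_anti _ (le_max_left m k) (hx' r)),
      ?_⟩
    rintro ⟨s', t'⟩ hst' hne
    rcases Finset.mem_insert.1 hst' with h | h
    · obtain ⟨rfl, rfl⟩ := Prod.mk.inj h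
      refine (Set.prod_mono (hsub s') (hsub t')).trans ((Set.prod_mono ?_ ?_).trans hk)
      · exact hx₁s ▸ cylinder_anti _ (le_max_right m k)
      · exact hx₁t ▸ cylinder_anti _ (le_max_right m k)
    · exact hD _ h hne

theorem exists_forall_cylinder_prod_subset {T : Type*} [Finite T]
    {D : Set ((∀ n, E n) × (∀ n, E n))} (hDo : IsOpen D) (hDd : Dense D)
    (x : T → ∀ n, E n) (m : ℕ) :
    ∃ n, m < n ∧ ∃ x' : T → ∀ n, E n, (∀ t, x' t ∈ cylinder (x t) m) ∧
      ∀ s t, s ≠ t → cylinder (x' s) n ×ˢ cylinder (x' t) n ⊆ D := by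
  have := Fintype.ofFinite T
  obtain ⟨n, hmn, x', hx', hD⟩ :=
    exists_forall_mem_finset_cylinder_prod_subset hDo hDd Finset.univ x m
  exact ⟨n, hmn, x', hx', fun s t hst => hD (s, t) (Finset.mem_univ _) hst⟩

end PiNat

theorem exists_antitone_isOpen_dense_of_mem_residual {X : Type*} [TopologicalSpace X]
    [BaireSpace X] {s : Set X} (hs : s ∈ residual X) :
    ∃ D : ℕ → Set X, Antitone D ∧ (∀ n, IsOpen (D n)) ∧ (∀ n, Dense (D n)) ∧ ⋂ n, D n ⊆ s := by
  obtain ⟨t, hts, htG, htd⟩ := mem_residual.1 hs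
  obtain ⟨f, hfo, rfl⟩ := htG.eq_iInter_nat
  refine ⟨fun n => ⋂ k ∈ Iic n, f k, fun m n hmn => biInter_mono (Iic_subset_Iic.2 hmn)
    fun _ _ => subset_rfl, fun n => (finite_Iic n).isOpen_biInter fun k _ => hfo k,
    fun n => htd.mono (subset_iInter₂ fun k _ => iInter_subset f k),
    (iInter_mono fun n => biInter_subset_of_mem (mem_Iic.2 le_rfl)).trans hts⟩

instance Pi.perfectSpace {ι α : Type*} [TopologicalSpace α] [Infinite ι] [Nontrivial α] :
    PerfectSpace (ι → α) := by
  classical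
  refine perfectSpace_iff_forall_not_isolated.2 fun x => ?_
  choose y hy using fun i => exists_ne (x i)
  have : Tendsto (fun i => update x i (y i)) cofinite (𝓝[≠] x) := by
    refine tendsto_nhdsWithin_iff.2 ⟨tendsto_pi_nhds.2 fun k => ?_, ?_⟩
    · exact tendsto_const_nhds.congr' ((eventually_cofinite_ne k).mono fun i hi =>
        (update_of_ne hi.symm _ _).symm)
    · exact Eventually.of_forall fun i h => hy i (by simpa using congrFun h i)
  exact this.neBot

theorem Continuous.perfect_range {X Y : Type*} [TopologicalSpace X] [TopologicalSpace Y]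
    [CompactSpace X] [PerfectSpace X] [T2Space Y] {f : X → Y} (hf : Continuous f)
    (hinj : Injective f) : Perfect (range f) := by
  refine ⟨(isCompact_range hf).isClosed, ?_⟩
  rintro _ ⟨x, rfl⟩
  simpa [map_principal] using (PerfectSpace.univ_preperfect x trivial).map hf.continuousAt hinj

section Scheme

open PiNat

variable {E : ℕ → Type*}

/-- `p n v` is the centre of the cylinder attached to the node `v`; the image of a branch `x`
takes its `i`-th coordinate from the node of `x` at level `i + 1`, whose cylinder fixes it. -/
def schemeMap (p : ∀ n, (Fin n → Bool) → ∀ k, E k) (x : ℕ → Bool) : ∀ k, E k :=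
  fun i => p (i + 1) (fun j => x j) i

variable {ℓ : ℕ → ℕ} {p : ∀ n, (Fin n → Bool) → ∀ k, E k}

theorem scheme_node_mem_cylinder (hℓ : Monotone ℓ)
    (hp : ∀ n v, p (n + 1) v ∈ cylinder (p n (Fin.init v)) (ℓ n)) (x : ℕ → Bool) {m n : ℕ}
    (hmn : m ≤ n) : p n (fun i => x i) ∈ cylinder (p m fun i => x i) (ℓ m) := by
  induction n, hmn using Nat.le_induction with
  | base => exact self_mem_cylinder _ _
  | succ n hmn ih => exact cylinder_subset_of_mem ih (hℓ hmn) (hp n _)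

theorem schemeMap_mem_cylinder (hℓ : StrictMono ℓ)
    (hp : ∀ n v, p (n + 1) v ∈ cylinder (p n (Fin.init v)) (ℓ n)) (x : ℕ → Bool) (n : ℕ) :
    schemeMap p x ∈ cylinder (p n fun i => x i) (ℓ n) := by
  intro i hi
  rcases le_total (i + 1) n with h | h
  · exact (scheme_node_mem_cylinder hℓ.monotone hp x h i (hℓ.id_le (i + 1))).symm
  · exact scheme_node_mem_cylinder hℓ.monotone hp x h i hi

theorem eventually_schemeMap_pair_mem (hℓ : StrictMono ℓ)
    (hp : ∀ n v, p (n + 1) v ∈ cylinder (p n (Fin.init v)) (ℓ n))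
    {D : ℕ → Set ((∀ k, E k) × (∀ k, E k))}
    (hD : ∀ n v w, v ≠ w → cylinder (p (n + 1) v) (ℓ (n + 1)) ×ˢ
      cylinder (p (n + 1) w) (ℓ (n + 1)) ⊆ D n)
    {c d : ℕ → Bool} (hcd : c ≠ d) : ∀ᶠ n in atTop, (schemeMap p c, schemeMap p d) ∈ D n := by
  obtain ⟨k, hk⟩ := Function.ne_iff.1 hcd
  refine eventually_atTop.2 ⟨k, fun n hn => hD n _ _ ?_
    ⟨schemeMap_mem_cylinder hℓ hp c _, schemeMap_mem_cylinder hℓ hp d _⟩⟩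
  exact fun h => hk (congrFun h ⟨k, Nat.lt_succ_of_le hn⟩)

variable [∀ n, TopologicalSpace (E n)]

theorem continuous_schemeMap (p : ∀ n, (Fin n → Bool) → ∀ k, E k) :
    Continuous (schemeMap p) :=
  continuous_pi fun i =>
    (continuous_of_discreteTopology (f := fun v : Fin (i + 1) → Bool => p (i + 1) v i)).comp
      (continuous_pi fun j : Fin (i + 1) => continuous_apply (j : ℕ))

variable [∀ n, DiscreteTopology (E n)]

theorem exists_scheme_prod_cylinder_subset [∀ n, Nonempty (E n)]
    {D : ℕ → Set ((∀ k, E k) × (∀ k, E k))}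
    (hDo : ∀ n, IsOpen (D n)) (hDd : ∀ n, Dense (D n)) :
    ∃ (ℓ : ℕ → ℕ) (p : ∀ n, (Fin n → Bool) → ∀ k, E k), StrictMono ℓ ∧
      (∀ n v, p (n + 1) v ∈ cylinder (p n (Fin.init v)) (ℓ n)) ∧
      ∀ n v w, v ≠ w → cylinder (p (n + 1) v) (ℓ (n + 1)) ×ˢ
        cylinder (p (n + 1) w) (ℓ (n + 1)) ⊆ D n := by
  choose next hnext q hq hqD using fun n m (p : (Fin n → Bool) → ∀ k, E k) =>
    exists_forall_cylinder_prod_subset (hDo n) (hDd n)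
      (fun v : Fin (n + 1) → Bool => p (Fin.init v)) m
  let level : ∀ n, ℕ × ((Fin n → Bool) → ∀ k, E k) := fun n =>
    Nat.rec (0, fun _ => Classical.arbitrary _)
      (fun n s => (next n s.1 s.2, q n s.1 s.2)) n
  exact ⟨fun n => (level n).1, fun n => (level n).2,
    strictMono_nat_of_lt_succ fun n => hnext n _ _, fun n => hq n _ _, fun n => hqD n _ _⟩

theorem exists_continuous_forall_ne_pair_mem_of_mem_residual [∀ n, Nonempty (E n)]
    {G : Set ((∀ k, E k) × (∀ k, E k))} (hG : G ∈ residual _) :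
    ∃ ψ : (ℕ → Bool) → ∀ k, E k, Continuous ψ ∧ ∀ c d, c ≠ d → (ψ c, ψ d) ∈ G := by
  obtain ⟨D, hDanti, hDo, hDd, hDG⟩ := exists_antitone_isOpen_dense_of_mem_residual hG
  obtain ⟨ℓ, p, hℓ, hp, hpD⟩ := exists_scheme_prod_cylinder_subset hDo hDd
  refine ⟨schemeMap p, continuous_schemeMap p, fun c d hcd => hDG (mem_iInter.2 fun n => ?_)⟩
  obtain ⟨N, hN⟩ := (eventually_schemeMap_pair_mem hℓ hp hpD hcd).exists_forall_of_atTop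
  exact hDanti (le_max_left n N) (hN _ (le_max_right n N))

end Scheme

/-- Mycielski's theorem for a meager equivalence relation on Cantor space: there is a
continuous injection sending distinct points to inequivalent points; in particular a
perfect partial transversal. -/
theorem stmt_12 (F : (ℕ → Bool) → (ℕ → Bool) → Prop) (hF : Equivalence F)
    (hmeager : IsMeagre {p : (ℕ → Bool) × (ℕ → Bool) | F p.1 p.2}) :
    ∃ ψ : (ℕ → Bool) → (ℕ → Bool), Continuous ψ ∧ Function.Injective ψ ∧
      (∀ c d : ℕ → Bool, c ≠ d → ¬ F (ψ c) (ψ d)) ∧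
      Perfect (Set.range ψ) ∧
      (∀ x ∈ Set.range ψ, ∀ y ∈ Set.range ψ, x ≠ y → ¬ F x y) := by
  obtain ⟨ψ, hψ, hψF⟩ := exists_continuous_forall_ne_pair_mem_of_mem_residual hmeager
  have hinj : Injective ψ := fun c d h => by_contra fun hcd => hψF c d hcd (h ▸ hF.refl (ψ c))
  refine ⟨ψ, hψ, hinj, hψF, hψ.perfect_range hinj, ?_⟩
  rintro _ ⟨c, rfl⟩ _ ⟨d, rfl⟩ hcd
  exact hψF c d (ne_of_apply_ne ψ hcd)
end

section
/- Let X be a Hausdorff space, φ : 2^ℕ → X continuous, E a binary relation on X, and suppose the pullback F = {(c, d) ∈ 2^ℕ × 2^ℕ : (φ(c), φ(d)) ∈ E} is disjoint from the digraph G₀ and is an equivalence relation with the Baire property. Then F is meager in 2^ℕ × 2^ℕ. -/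
/-!
If `F` were non-meagre, then, having the Baire property, it would be comeagre in an open box, and
Kuratowski–Ulam gives a point whose `F`-class is comeagre in a nonempty open set `V`; as `F` is an
equivalence relation, it is then comeagre in `V × V`. Since the `s n` are dense, `V` contains the
ranges of the two open embeddings `c ↦ s n ⌢ i ⌢ c`, and a second application of Kuratowski–Ulam
yields `c` and `z` with `s n ⌢ 0 ⌢ c F z F s n ⌢ 1 ⌢ c`: an edge of `G₀` lying in `F`.
-/

open Filter Topology

open Set

section KuratowskiUlam

variable {α β : Type*} [TopologicalSpace α] [TopologicalSpace β] [SecondCountableTopology β]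

theorem eventually_residual_dense_sections {W : Set (α × β)} (hWo : IsOpen W) (hWd : Dense W) :
    ∀ᶠ x in residual α, Dense {y | (x, y) ∈ W} := by
  obtain ⟨b, hbc, hbne, hb⟩ := TopologicalSpace.exists_countable_basis β
  have hmeets : ∀ V ∈ b, ∀ᶠ x in residual α, ∃ y ∈ V, (x, y) ∈ W := by
    intro V hV
    have hVne : V.Nonempty := nonempty_iff_ne_empty.2 (ne_of_mem_of_not_mem hV hbne)
    refine residual_of_dense_open ?_ (dense_iff_inter_open.2 fun O hO hOne => ?_)
    · convert isOpen_biUnion fun y (_ : y ∈ V) => hWo.preimage (Continuous.prodMk_left y)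
        using 1
      ext
      simp
    · obtain ⟨p, ⟨hpO, hpV⟩, hpW⟩ :=
        hWd.inter_open_nonempty _ (hO.prod (hb.isOpen hV)) (hOne.prod hVne)
      exact ⟨p.1, hpO, p.2, hpV, hpW⟩
  filter_upwards [(eventually_countable_ball hbc).2 hmeets] with x hx
  exact hb.dense_iff.2 fun V hV _ => hx V hV

theorem eventually_residual_sections_mem_residual {A : Set (α × β)}
    (hA : A ∈ residual (α × β)) : ∀ᶠ x in residual α, {y | (x, y) ∈ A} ∈ residual β := by
  obtain ⟨S, hSo, hSd, hSc, hSA⟩ := mem_residual_iff.1 hA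
  filter_upwards [(eventually_countable_ball hSc).2 fun W hW =>
    eventually_residual_dense_sections (hSo W hW) (hSd W hW)] with x hx
  refine mem_of_superset ((countable_bInter_mem hSc).2 fun W hW =>
    residual_of_dense_open ((hSo W hW).preimage (Continuous.prodMk_right x)) (hx W hW)) ?_
  intro y hy
  exact hSA (mem_sInter.2 fun W hW => mem_iInter₂.1 hy W hW)

theorem IsMeagre.eventually_residual_isMeagre_sections {M : Set (α × β)} (hM : IsMeagre M) :
    ∀ᶠ x in residual α, IsMeagre {y | (x, y) ∈ M} :=
  eventually_residual_sections_mem_residual hM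

end KuratowskiUlam

namespace Equivalence

variable {Y : Type*} [TopologicalSpace Y] {r : Y → Y → Prop}

theorem isMeagre_prod_self_sdiff (hr : Equivalence r) {V : Set Y} {x : Y}
    (hx : IsMeagre (V \ {y | r x y})) : IsMeagre ((V ×ˢ V) \ {p | r p.1 p.2}) := by
  refine ((hx.preimage_of_isOpenMap continuous_fst isOpenMap_fst).union
    (hx.preimage_of_isOpenMap continuous_snd isOpenMap_snd)).mono ?_
  rintro ⟨y, z⟩ ⟨⟨hy, hz⟩, hyz⟩
  by_contra h
  have hxy : r x y := not_not.1 fun hxy => h (Or.inl ⟨hy, hxy⟩)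
  have hxz : r x z := not_not.1 fun hxz => h (Or.inr ⟨hz, hxz⟩)
  exact hyz (hr.trans (hr.symm hxy) hxz)

variable [SecondCountableTopology Y] [BaireSpace Y]

theorem exists_isOpen_prod_self_sdiff_isMeagre (hr : Equivalence r)
    (hBP : ∃ U : Set (Y × Y), IsOpen U ∧ IsMeagre (symmDiff {p | r p.1 p.2} U))
    (hF : ¬ IsMeagre {p : Y × Y | r p.1 p.2}) :
    ∃ V : Set Y, IsOpen V ∧ V.Nonempty ∧ IsMeagre ((V ×ˢ V) \ {p | r p.1 p.2}) := by
  obtain ⟨U, hUo, hUF⟩ := hBP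
  obtain ⟨p, hp⟩ : U.Nonempty := by
    refine nonempty_iff_ne_empty.2 fun hU => hF (hUF.mono fun q hq => ?_)
    exact mem_symmDiff.2 (Or.inl ⟨hq, hU ▸ notMem_empty q⟩)
  obtain ⟨u, v, hu, hv, hpu, hpv, huv⟩ := isOpen_prod_iff.1 hUo p.1 p.2 hp
  have hbox : IsMeagre ((u ×ˢ v) \ {p | r p.1 p.2}) :=
    hUF.mono fun q hq => Or.inr ⟨huv hq.1, hq.2⟩
  obtain ⟨x, hxu, hx : IsMeagre {y | (x, y) ∈ (u ×ˢ v) \ {p | r p.1 p.2}}⟩ :=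
    (dense_of_mem_residual hbox.eventually_residual_isMeagre_sections).inter_open_nonempty
      u hu ⟨p.1, hpu⟩
  have hclass : IsMeagre (v \ {y | r x y}) :=
    hx.mono fun y hy => (⟨mk_mem_prod hxu hy.1, hy.2⟩ : (x, y) ∈ (u ×ˢ v) \ {p | r p.1 p.2})
  exact ⟨v, hv, ⟨p.2, hpv⟩, hr.isMeagre_prod_self_sdiff hclass⟩

theorem exists_rel_of_isMeagre_prod_self_sdiff (hr : Equivalence r) {V : Set Y}
    (hVo : IsOpen V) (hVne : V.Nonempty) (hV : IsMeagre ((V ×ˢ V) \ {p | r p.1 p.2}))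
    {Z : Type*} [TopologicalSpace Z] [BaireSpace Z] [Nonempty Z] {f g : Z → Y}
    (hf : Continuous f) (hfo : IsOpenMap f) (hg : Continuous g) (hgo : IsOpenMap g)
    (hfV : ∀ c, f c ∈ V) (hgV : ∀ c, g c ∈ V) : ∃ c, r (f c) (g c) := by
  set M := (V ×ˢ V) \ {p : Y × Y | r p.1 p.2}
  have hT : IsMeagre (Prod.map f id ⁻¹' M ∪ Prod.map g id ⁻¹' M) :=
    (hV.preimage_of_isOpenMap (hf.prodMap continuous_id) (hfo.prodMap IsOpenMap.id)).union
      (hV.preimage_of_isOpenMap (hg.prodMap continuous_id) (hgo.prodMap IsOpenMap.id))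
  obtain ⟨c, hc⟩ := (dense_of_mem_residual hT.eventually_residual_isMeagre_sections).nonempty
  obtain ⟨z, hzV, hz⟩ := not_subset.1 fun hsub => not_isMeagre_of_isOpen hVo hVne (hc.mono hsub)
  have hfz : r (f c) z := not_not.1 fun h => hz (Or.inl ⟨⟨hfV c, hzV⟩, h⟩)
  have hgz : r (g c) z := not_not.1 fun h => hz (Or.inr ⟨⟨hgV c, hzV⟩, h⟩)
  exact ⟨c, hr.trans hfz (hr.symm hgz)⟩

end Equivalence

section Cantor

theorem cat01_of_lt {l : List Bool} {k : ℕ} (h : k < l.length) (c : ℕ → Bool) :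
    cat01 l c k = l[k] := by
  simp [cat01, h]

theorem cat01_of_le {l : List Bool} {k : ℕ} (h : l.length ≤ k) (c : ℕ → Bool) :
    cat01 l c k = c (k - l.length) := by
  simp [cat01, Nat.not_lt.2 h]

theorem injective_cat01 (l : List Bool) : Function.Injective (cat01 l) := by
  intro c d hcd
  funext k
  simpa [cat01_of_le] using congrFun hcd (k + l.length)

theorem range_cat01_eq_cylinder (l : List Bool) (c₀ : ℕ → Bool) :
    range (cat01 l) = PiNat.cylinder (cat01 l c₀) l.length := by
  ext x
  simp only [mem_range, PiNat.mem_cylinder_iff]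
  constructor
  · rintro ⟨c, rfl⟩ i hi
    rw [cat01_of_lt hi, cat01_of_lt hi]
  · intro hx
    refine ⟨fun k => x (k + l.length), funext fun k => ?_⟩
    rcases lt_or_ge k l.length with hk | hk
    · rw [hx k hk, cat01_of_lt hk, cat01_of_lt hk]
    · rw [cat01_of_le hk, Nat.sub_add_cancel hk]

theorem cat01_mem_cylinder {x : ℕ → Bool} {m : ℕ} {l : List Bool}
    (h : List.ofFn (fun i : Fin m => x i) <+: l) (c : ℕ → Bool) :
    cat01 l c ∈ PiNat.cylinder x m := by
  intro i hi
  have hil : i < l.length := hi.trans_le (by simpa using h.length_le)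
  rw [cat01_of_lt hil, ← h.getElem (by simpa using hi)]
  simp

theorem exists_cat01_mem_of_isOpen {s : ℕ → List Bool}
    (hdense : ∀ l : List Bool, ∃ n, l <+: s n) {V : Set (ℕ → Bool)} (hVo : IsOpen V)
    (hVne : V.Nonempty) :
    ∃ n, ∀ (i : Bool) (c : ℕ → Bool), cat01 (s n ++ [i]) c ∈ V := by
  obtain ⟨x, hx⟩ := hVne
  obtain ⟨_, ⟨y, m, rfl⟩, hxy, hyV⟩ :=
    (PiNat.isTopologicalBasis_cylinders fun _ => Bool).exists_subset_of_mem_open hx hVo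
  rw [← PiNat.mem_cylinder_iff_eq.1 hxy] at hyV
  obtain ⟨n, hn⟩ := hdense (List.ofFn fun i : Fin m => x i)
  exact ⟨n, fun i c => hyV (cat01_mem_cylinder (hn.trans (List.prefix_append _ [i])) c)⟩

end Cantor

theorem stmt_13_general {X : Type*}
    (s : ℕ → List Bool)
    (hdense : ∀ l : List Bool, ∃ n, l <+: s n)
    (φ : (ℕ → Bool) → X)
    (E : Set (X × X))
    (hdisj : ∀ c d : ℕ → Bool, (c, d) ∈ G0 s → (φ c, φ d) ∉ E)
    (hEq : Equivalence (fun c d : ℕ → Bool => (φ c, φ d) ∈ E))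
    (hBP : ∃ U : Set ((ℕ → Bool) × (ℕ → Bool)), IsOpen U ∧
      IsMeagre (symmDiff {p : (ℕ → Bool) × (ℕ → Bool) | (φ p.1, φ p.2) ∈ E} U)) :
    IsMeagre {p : (ℕ → Bool) × (ℕ → Bool) | (φ p.1, φ p.2) ∈ E} := by
  by_contra hF
  obtain ⟨V, hVo, hVne, hV⟩ := hEq.exists_isOpen_prod_self_sdiff_isMeagre hBP hF
  obtain ⟨n, hn⟩ := exists_cat01_mem_of_isOpen hdense hVo hVne
  obtain ⟨c, hc⟩ := hEq.exists_rel_of_isMeagre_prod_self_sdiff hVo hVne hV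
    (continuous_cat01 _) (isOpenMap_cat01 _) (continuous_cat01 _) (isOpenMap_cat01 _)
    (hn false) (hn true)
  exact hdisj _ _ ⟨n, c, rfl⟩ hc

/-- If the pullback of `E` through a continuous map into a Hausdorff space is an
equivalence relation with the Baire property disjoint from `G₀`, then it is meager. -/
theorem stmt_13 {X : Type*} [TopologicalSpace X] [T2Space X]
    (s : ℕ → List Bool)
    (hlen : ∀ n, (s n).length = n)
    (hdense : ∀ l : List Bool, ∃ n, l <+: s n)
    (φ : (ℕ → Bool) → X) (hφ : Continuous φ)
    (E : Set (X × X))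
    (hdisj : ∀ c d : ℕ → Bool, (c, d) ∈ G0 s → (φ c, φ d) ∉ E)
    (hEq : Equivalence (fun c d : ℕ → Bool => (φ c, φ d) ∈ E))
    (hBP : ∃ U : Set ((ℕ → Bool) × (ℕ → Bool)), IsOpen U ∧
      IsMeagre (symmDiff {p : (ℕ → Bool) × (ℕ → Bool) | (φ p.1, φ p.2) ∈ E} U)) :
    IsMeagre {p : (ℕ → Bool) × (ℕ → Bool) | (φ p.1, φ p.2) ∈ E} :=
  stmt_13_general s hdense φ E hdisj hEq hBP
end

section
/- Let (X, f) be a dynamical system on a complete metric space X with a dense subset of cardinality κ (an infinite cardinal). If X contains a scrambled set of cardinality strictly greater than κ, then X contains a scrambled Cantor set. -/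
open Filter Topology

/-!
Distinct points `x, y` of a scrambled set are at positive distance for the pseudo-emetric
`d(x, y) = limsup edist (fⁿ x) (fⁿ y)`. Since `X` has a dense set of size `κ`, every set of more
than `κ` points has a condensation point (all of whose balls meet it in more than `κ` points),
and every set of more than `κ` points of the scrambled set `Y` contains two such sets at
`d`-distance at least some `δ > 0`: either some point is a `d`-condensation point, or there is a
scale at which a maximal separated family is large.

Splitting in this way level after level gives a Cantor scheme of closed balls, of radius
`≤ 1 / (n + 1)` at level `n`, centred at condensation points of pools of more than `κ` points of
`Y`. Two centres are proximal and `d`-apart, so at two times `≥ n` their orbits are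
`1 / (2 (n + 1))`-close, resp. `δ / 2`-apart; by continuity of the finitely many iterates
involved, shrinking the balls keeps every two cells close, resp. `δ / 4`-apart, at those times.
The branches of the scheme then form a Cantor set whose distinct points are proximal but not
asymptotic.
-/

open Set Cardinal Metric
open scoped ENNReal NNReal

universe u v

section Cardinal

variable {α : Type u} {κ : Cardinal.{u}}

theorem Cardinal.mk_iUnion_le_of_le {ι : Type v} (hκ : ℵ₀ ≤ κ) {A : ι → Set α}
    (hι : lift.{u} #ι ≤ lift.{v} κ) (hA : ∀ i, #(A i) ≤ κ) : #(⋃ i, A i) ≤ κ := by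
  rw [← lift_le.{v}]
  calc lift.{v} #(⋃ i, A i) ≤ lift.{u} #ι * ⨆ i, lift.{v} #(A i) := mk_iUnion_le_lift A
    _ ≤ lift.{v} κ * lift.{v} κ := mul_le_mul' hι (ciSup_le' fun i => lift_le.2 (hA i))
    _ = lift.{v} κ := mul_eq_self (by simpa using hκ)

theorem Cardinal.exists_lt_mk_of_lt_mk_iUnion {ι : Type v} (hκ : ℵ₀ ≤ κ) {A : ι → Set α}
    (hι : lift.{u} #ι ≤ lift.{v} κ) (h : κ < #(⋃ i, A i)) : ∃ i, κ < #(A i) := by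
  by_contra! hA
  exact h.not_ge (mk_iUnion_le_of_le hκ hι hA)

theorem Cardinal.exists_disjoint_subsets_mk_eq {s : Set α} (hs : ℵ₀ ≤ #s) :
    ∃ t ⊆ s, ∃ t' ⊆ s, Disjoint t t' ∧ #t = #s ∧ #t' = #s := by
  obtain ⟨e⟩ : Nonempty (s ⊕ s ≃ s) := Cardinal.eq.1 (by rw [mk_sum, lift_id, add_eq_self hs])
  have he : (Subtype.val ∘ e).Injective := Subtype.val_injective.comp e.injective
  refine ⟨range (Subtype.val ∘ e ∘ Sum.inl), range_subset_iff.2 fun x => (e _).2,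
    range (Subtype.val ∘ e ∘ Sum.inr), range_subset_iff.2 fun x => (e _).2,
    disjoint_range_iff.2 fun x y h => Sum.inl_ne_inr (he h),
    mk_range_eq _ (he.comp Sum.inl_injective), mk_range_eq _ (he.comp Sum.inr_injective)⟩

end Cardinal

theorem exists_condensation_point {X : Type u} [PseudoMetricSpace X] {κ : Cardinal.{u}}
    (hκ : ℵ₀ ≤ κ) {D : Set X} (hD : Dense D) (hDκ : #D ≤ κ) {W : Set X} (hW : κ < #W) :
    ∃ x ∈ W, ∀ r > 0, κ < #(W ∩ ball x r : Set X) := by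
  let B : D × ℕ → Set X := fun p => ball (p.1 : X) (1 / (p.2 + 1))
  let T : Set (D × ℕ) := {p | #(W ∩ B p : Set X) ≤ κ}
  have hT : #T ≤ κ := calc
    #T ≤ #(D × ℕ) := mk_set_le T
    _ = #D * ℵ₀ := by simp
    _ ≤ κ * κ := mul_le_mul' hDκ hκ
    _ = κ := mul_eq_self hκ
  have hsmall : #(⋃ p : T, W ∩ B p : Set X) ≤ κ :=
    mk_iUnion_le_of_le hκ (by simpa using hT) (·.2)
  obtain ⟨x, hxW, hx⟩ : (W \ ⋃ p : T, W ∩ B p).Nonempty := by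
    refine nonempty_iff_ne_empty.2 fun h => hW.not_ge (hsmall.trans' (mk_le_mk_of_subset ?_))
    rwa [sdiff_eq_empty] at h
  refine ⟨x, hxW, fun r hr => ?_⟩
  obtain ⟨k, hk⟩ := exists_nat_one_div_lt (half_pos hr)
  obtain ⟨d, hdD, hxd⟩ := hD.exists_dist_lt x (Nat.one_div_pos_of_nat (n := k))
  have hxB : x ∈ B (⟨d, hdD⟩, k) := by simpa [B, dist_comm] using hxd
  have hBx : B (⟨d, hdD⟩, k) ⊆ ball x r := ball_subset_ball' (by rw [dist_comm]; linarith)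
  have hbig : (⟨d, hdD⟩, k) ∉ T := fun hT => hx (mem_iUnion.2 ⟨⟨_, hT⟩, hxW, hxB⟩)
  exact (not_le.1 hbig).trans_le (mk_le_mk_of_subset (inter_subset_inter_right W hBx))

section Separation

variable {α : Type u} [PseudoEMetricSpace α] {κ : Cardinal.{u}} {W : Set α}

theorem Metric.exists_maximal_isSeparated (ε : ℝ≥0∞) (s : Set α) :
    ∃ N, Maximal (fun N => N ⊆ s ∧ IsSeparated ε N) N := by
  refine zorn_subset _ fun c hc hchain => ⟨⋃₀ c, ⟨sUnion_subset fun t ht => (hc ht).1, ?_⟩,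
    fun t ht => subset_sUnion_of_mem ht⟩
  exact (pairwise_sUnion hchain.directedOn).2 fun t ht => (hc ht).2

theorem Metric.IsCover.lt_mk (hκ : ℵ₀ ≤ κ) {ε : ℝ≥0} {s N : Set α} (hN : IsCover ε s N)
    (hsmall : ∀ x ∈ N, #(s ∩ closedEBall x ε : Set α) ≤ κ) (hs : κ < #s) : κ < #N := by
  by_contra! hNκ
  refine hs.not_ge (le_trans (mk_le_mk_of_subset fun x hx => ?_)
    (mk_iUnion_le_of_le hκ (by simpa using hNκ) fun y : N => hsmall y y.2))
  obtain ⟨y, hyN, hxy⟩ := hN hx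
  exact mem_iUnion.2 ⟨⟨y, hyN⟩, hx, hxy⟩

theorem exists_separated_subsets_of_forall_lt_mk (hκ : ℵ₀ ≤ κ) {v : α} (hW : κ < #W)
    (hpos : ∀ w ∈ W, w ≠ v → edist v w ≠ 0)
    (hv : ∀ k : ℕ, κ < #(W ∩ closedEBall v (2⁻¹ ^ k) : Set α)) :
    ∃ W₀ ⊆ W, ∃ W₁ ⊆ W, κ < #W₀ ∧ κ < #W₁ ∧
      ∃ δ : ℝ≥0, 0 < δ ∧ ∀ x ∈ W₀, ∀ y ∈ W₁, (δ : ℝ≥0∞) ≤ edist x y := by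
  have hcover : W ⊆ {v} ∪ ⋃ k : ℕ, {w ∈ W | 2⁻¹ ^ k < edist v w} := by
    intro w hw
    by_cases hwv : w = v
    · exact .inl hwv
    obtain ⟨k, hk⟩ := ENNReal.exists_inv_two_pow_lt (hpos w hw hwv)
    exact .inr (mem_iUnion.2 ⟨k, hw, hk⟩)
  obtain ⟨k, hk⟩ := exists_lt_mk_of_lt_mk_iUnion hκ (by simpa using hκ)
    (A := fun k : ℕ => {w ∈ W | 2⁻¹ ^ k < edist v w}) <| by
    refine lt_of_not_ge fun h => hW.not_ge ((mk_le_mk_of_subset hcover).trans ?_)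
    calc _ ≤ #({v} : Set α) + _ := mk_union_le _ _
      _ ≤ 1 + κ := add_le_add (mk_singleton v).le h
      _ = κ := by rw [add_comm, add_one_eq hκ]
  refine ⟨_, inter_subset_left, _, sep_subset _ _, hv (k + 1), hk, 2⁻¹ ^ (k + 1),
    by positivity, fun x hx y hy => le_of_not_gt fun hxy => hy.2.not_ge ?_⟩
  calc edist v y ≤ edist v x + edist x y := edist_triangle _ _ _
    _ ≤ 2⁻¹ ^ (k + 1) + 2⁻¹ ^ (k + 1) := by
      rw [edist_comm]; push_cast at hxy; exact add_le_add hx.2 hxy.le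
    _ = 2⁻¹ ^ k := by rw [pow_succ, ← mul_add, ENNReal.inv_two_add_inv_two, mul_one]

theorem exists_separated_subsets_of_forall_mk_le (hκ : ℵ₀ ≤ κ) (hW : κ < #W)
    (hsmall : ∀ v ∈ W, ∃ k : ℕ, #(W ∩ closedEBall v (2⁻¹ ^ k) : Set α) ≤ κ) :
    ∃ W₀ ⊆ W, ∃ W₁ ⊆ W, κ < #W₀ ∧ κ < #W₁ ∧
      ∃ δ : ℝ≥0, 0 < δ ∧ ∀ x ∈ W₀, ∀ y ∈ W₁, (δ : ℝ≥0∞) ≤ edist x y := by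
  obtain ⟨k, hk⟩ := exists_lt_mk_of_lt_mk_iUnion hκ (by simpa using hκ)
    (A := fun k : ℕ => {v ∈ W | #(W ∩ closedEBall v (2⁻¹ ^ k) : Set α) ≤ κ}) <|
    hW.trans_le <| mk_le_mk_of_subset fun v hv => mem_iUnion.2 (by simpa [hv] using hsmall v hv)
  obtain ⟨N, hN⟩ := exists_maximal_isSeparated (((2⁻¹ : ℝ≥0) ^ k : ℝ≥0) : ℝ≥0∞)
    {v ∈ W | #(W ∩ closedEBall v (2⁻¹ ^ k) : Set α) ≤ κ}
  have hNW : N ⊆ W := fun x hx => (hN.1.1 hx).1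
  have hNκ : κ < #N := by
    refine (IsCover.of_maximal_isSeparated hN).lt_mk hκ (fun x hx => ?_) hk
    refine le_trans (mk_le_mk_of_subset ?_) (hN.1.1 hx).2
    push_cast
    exact inter_subset_inter_left _ (sep_subset _ _)
  obtain ⟨A, hAN, B, hBN, hAB, hA, hB⟩ := exists_disjoint_subsets_mk_eq (hκ.trans hNκ.le)
  refine ⟨A, hAN.trans hNW, B, hBN.trans hNW, hA ▸ hNκ, hB ▸ hNκ, (2⁻¹ : ℝ≥0) ^ k,
    by positivity, fun x hx y hy => (hN.1.2 (hAN hx) (hBN hy) (hAB.ne_of_mem hx hy)).le⟩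

theorem exists_separated_subsets (hκ : ℵ₀ ≤ κ) (hW : κ < #W)
    (hpos : W.Pairwise fun x y => edist x y ≠ 0) :
    ∃ W₀ ⊆ W, ∃ W₁ ⊆ W, κ < #W₀ ∧ κ < #W₁ ∧
      ∃ δ : ℝ≥0, 0 < δ ∧ ∀ x ∈ W₀, ∀ y ∈ W₁, (δ : ℝ≥0∞) ≤ edist x y := by
  by_cases hcond : ∃ v ∈ W, ∀ k : ℕ, κ < #(W ∩ closedEBall v (2⁻¹ ^ k) : Set α)
  · obtain ⟨v, hvW, hv⟩ := hcond
    exact exists_separated_subsets_of_forall_lt_mk hκ hW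
      (fun w hw hwv => hpos hvW hw (Ne.symm hwv)) hv
  · push Not at hcond
    exact exists_separated_subsets_of_forall_mk_le hκ hW hcond

end Separation

theorem ENNReal.limsup_add_le' {ι : Type*} {l : Filter ι} (u v : ι → ℝ≥0∞) :
    limsup (u + v) l ≤ limsup u l + limsup v l := by
  refine le_of_forall_gt fun c hc => ?_
  obtain ⟨a, ha, b, hb, hab⟩ := ENNReal.exists_add_lt_of_add_lt hc
  refine (limsup_le_of_le (by isBoundedDefault) ?_).trans_lt hab
  filter_upwards [eventually_lt_of_limsup_lt ha, eventually_lt_of_limsup_lt hb] with x hx hy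
  exact add_le_add hx.le hy.le

section Orbit

variable {X : Type u} [MetricSpace X] {f : X → X} {Y : Set X} {x y : X}

noncomputable def orbitLimsupEDist (f : X → X) (x y : X) : ℝ≥0∞ :=
  limsup (fun n => edist (f^[n] x) (f^[n] y)) atTop

def OrbitLimsup (_f : X → X) : Type u := X

noncomputable instance : PseudoEMetricSpace (OrbitLimsup f) where
  edist x y := orbitLimsupEDist (X := X) f x y
  edist_self x := by simp [orbitLimsupEDist]
  edist_comm x y := by simp only [orbitLimsupEDist, edist_comm]
  edist_triangle x y z :=
    (limsup_le_limsup (.of_forall fun n => edist_triangle _ (f^[n] y) _)).trans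
      (ENNReal.limsup_add_le' _ _)

@[simp]
theorem orbitLimsupEDist_self (x : X) : orbitLimsupEDist f x x = 0 := by
  simp [orbitLimsupEDist]

theorem orbitLimsupEDist_comm (x y : X) : orbitLimsupEDist f x y = orbitLimsupEDist f y x :=
  edist_comm (α := OrbitLimsup f) x y

theorem Scrambled.exists_separated_subsets {κ : Cardinal.{u}} (hκ : ℵ₀ ≤ κ)
    (hY : Scrambled f Y) {W : Set X} (hWY : W ⊆ Y) (hW : κ < #W) :
    ∃ W₀ ⊆ W, ∃ W₁ ⊆ W, κ < #W₀ ∧ κ < #W₁ ∧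
      ∃ δ : ℝ≥0, 0 < δ ∧ ∀ x ∈ W₀, ∀ y ∈ W₁, (δ : ℝ≥0∞) ≤ orbitLimsupEDist f x y :=
  _root_.exists_separated_subsets (α := OrbitLimsup f) hκ hW
    fun _ hx _ hy hxy => (hY _ (hWY hx) _ (hWY hy) hxy).2

theorem frequently_lt_dist_of_ofReal_lt {c : ℝ}
    (h : ENNReal.ofReal c < orbitLimsupEDist f x y) :
    ∃ᶠ n in atTop, c < dist (f^[n] x) (f^[n] y) := by
  refine (frequently_lt_of_lt_limsup (by isBoundedDefault) h).mono fun n hn => ?_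
  rw [edist_dist] at hn
  exact (ENNReal.ofReal_lt_ofReal_iff'.1 hn).1

theorem Proximal.frequently_dist_lt (h : Proximal f x y) {ε : ℝ} (hε : 0 < ε) :
    ∃ᶠ n in atTop, dist (f^[n] x) (f^[n] y) < ε := by
  refine (frequently_lt_of_liminf_lt (by isBoundedDefault)
    (h.symm ▸ ENNReal.ofReal_pos.2 hε : liminf _ atTop < ENNReal.ofReal ε)).mono fun n hn => ?_
  rw [edist_dist] at hn
  exact (ENNReal.ofReal_lt_ofReal_iff hε).1 hn

theorem proximal_of_forall_frequently
    (h : ∀ ε > 0, ∃ᶠ n in atTop, dist (f^[n] x) (f^[n] y) ≤ ε) : Proximal f x y := by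
  refine le_antisymm (ENNReal.le_of_forall_pos_le_add fun ε hε _ => ?_) bot_le
  refine liminf_le_of_frequently_le ((h ε hε).mono fun n hn => ?_) (by isBoundedDefault)
  rw [zero_add, edist_dist, ← ENNReal.ofReal_coe_nnreal]
  exact ENNReal.ofReal_le_ofReal hn

theorem not_asymptotic_of_frequently {c : ℝ} (hc : 0 < c)
    (h : ∃ᶠ n in atTop, c ≤ dist (f^[n] x) (f^[n] y)) : ¬ Asymptotic f x y := by
  refine fun hA => (ENNReal.ofReal_pos.2 hc).ne' (le_antisymm ?_ bot_le)
  refine (le_limsup_of_frequently_le (h.mono fun n hn => ?_) (by isBoundedDefault)).trans_eq hA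
  rw [edist_dist]
  exact ENNReal.ofReal_le_ofReal hn

theorem Continuous.eventually_dist_iterate_lt (hf : Continuous f) (x : X) (m : ℕ) {ε : ℝ}
    (hε : 0 < ε) : ∀ᶠ z in 𝓝 x, dist (f^[m] z) (f^[m] x) < ε :=
  (hf.iterate m).continuousAt.eventually (ball_mem_nhds _ hε)

end Orbit

theorem exists_seq_of_succ {T : ℕ → Type*} {P : ∀ n, T n → Prop}
    {r : ∀ n, T (n + 1) → T n → Prop} (h₀ : ∃ t, P 0 t)
    (h : ∀ n t, P n t → ∃ t', P (n + 1) t' ∧ r n t' t) :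
    ∃ t : ∀ n, T n, ∀ n, P n (t n) ∧ r n (t (n + 1)) (t n) := by
  choose t₀ ht₀ using h₀
  choose next hnext hr using h
  let t : ∀ n, {t : T n // P n t} :=
    fun n => Nat.rec ⟨t₀, ht₀⟩ (fun n t => ⟨next n t.1 t.2, hnext n t.1 t.2⟩) n
  exact ⟨fun n => (t n).1, fun n => ⟨(t n).2, hr n _ _⟩⟩

open PiNat CantorScheme in
theorem CantorScheme.exists_isEmbedding_s18 {X : Type*} [MetricSpace X] [CompleteSpace X]
    {A : List Bool → Set X} (hclosed : ∀ l, IsClosed (A l)) (hanti : CantorScheme.Antitone A)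
    (hdisj : CantorScheme.Disjoint A) (hdiam : VanishingDiam A) (hne : ∀ l, (A l).Nonempty) :
    ∃ φ : (ℕ → Bool) → X, IsEmbedding φ ∧ ∀ σ n, φ σ ∈ A (res σ n) := by
  have hdom := (hanti.closureAntitone hclosed).map_of_vanishingDiam hdiam hne
  let φ : (ℕ → Bool) → X := fun σ => (inducedMap A).2 ⟨σ, hdom ▸ mem_univ σ⟩
  have hcont : Continuous φ := hdiam.map_continuous.comp (continuous_id.subtype_mk _)
  have hinj : φ.Injective := fun σ τ h => congrArg Subtype.val (hdisj.map_injective h)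
  exact ⟨φ, (hcont.isClosedEmbedding hinj).isEmbedding, fun σ n => map_mem _ n⟩

/-- One level of the construction: closed balls `cell i`, and inside the open balls pools of
points of the scrambled set that are pairwise `sep`-apart for `orbitLimsupEDist`. -/
structure Cells (ι X : Type*) where
  center : ι → X
  radius : ι → ℝ
  pool : ι → Set X
  sep : ι → ι → ℝ≥0

namespace Cells

section Level

variable {ι : Type*} {X : Type u} [MetricSpace X] {f : X → X} {Y : Set X} {κ : Cardinal.{u}}

def cell (C : Cells ι X) (i : ι) : Set X := closedBall (C.center i) (C.radius i)

structure IsSeparatedPools (f : X → X) (Y : Set X) (κ : Cardinal.{u}) (R : ι → Set X)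
    (s : ι → ι → ℝ≥0) : Prop where
  subset : ∀ i, R i ⊆ Y
  lt_mk : ∀ i, κ < #(R i)
  sep_pos : ∀ i j, i ≠ j → 0 < s i j
  sep_le : ∀ i j, i ≠ j → ∀ x ∈ R i, ∀ y ∈ R j, (s i j : ℝ≥0∞) ≤ orbitLimsupEDist f x y

structure IsScrambledLevel (C : Cells ι X) (f : X → X) (Y : Set X) (κ : Cardinal.{u}) (n : ℕ) :
    Prop where
  pools : IsSeparatedPools f Y κ C.pool C.sep
  pool_subset_ball : ∀ i, C.pool i ⊆ ball (C.center i) (C.radius i)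
  radius_le : ∀ i, C.radius i ≤ 1 / (n + 1)
  exists_dist_le : ∀ i j, i ≠ j → ∃ m ≥ n, ∀ x ∈ C.cell i, ∀ y ∈ C.cell j,
    dist (f^[m] x) (f^[m] y) ≤ 1 / (n + 1)
  exists_le_dist : ∀ i j, i ≠ j → ∃ m ≥ n, ∀ x ∈ C.cell i, ∀ y ∈ C.cell j,
    (C.sep i j : ℝ) / 4 ≤ dist (f^[m] x) (f^[m] y)

variable {C : Cells ι X} {n : ℕ} {R : ι → Set X} {s : ι → ι → ℝ≥0}

theorem IsScrambledLevel.center_mem_cell (hC : C.IsScrambledLevel f Y κ n) (i : ι) :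
    C.center i ∈ C.cell i := by
  obtain ⟨⟨x, hx⟩⟩ := mk_ne_zero_iff.1 (ne_bot_of_gt (hC.pools.lt_mk i))
  exact mem_closedBall_self (dist_nonneg.trans (hC.pool_subset_ball i hx).le)

theorem IsScrambledLevel.disjoint_cell (hC : C.IsScrambledLevel f Y κ n) {i j : ι} (hij : i ≠ j) :
    Disjoint (C.cell i) (C.cell j) := by
  refine Set.disjoint_left.2 fun x hxi hxj => ?_
  obtain ⟨m, -, hm⟩ := hC.exists_le_dist i j hij
  have hpos : (0 : ℝ) < C.sep i j := NNReal.coe_pos.2 (hC.pools.sep_pos i j hij)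
  have := hm x hxi x hxj
  rw [dist_self] at this
  linarith

theorem IsScrambledLevel.ediam_cell_le (hC : C.IsScrambledLevel f Y κ n) (i : ι) :
    ediam (C.cell i) ≤ ENNReal.ofReal (2 * (1 / (n + 1))) := by
  refine ediam_le_of_forall_dist_le fun x hx y hy => ?_
  have := dist_triangle_right x y (C.center i)
  have := hC.radius_le i
  simp only [cell, mem_closedBall] at hx hy
  linarith

theorem IsSeparatedPools.exists_times (hY : Scrambled f Y) (hR : IsSeparatedPools f Y κ R s)
    {x : ι → X} (hxR : ∀ i, x i ∈ R i) (n : ℕ) {η : ℝ} (hη : 0 < η) :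
    ∃ mc mf : ι → ι → ℕ, ∀ i j, i ≠ j →
      n ≤ mc i j ∧ dist (f^[mc i j] (x i)) (f^[mc i j] (x j)) < η ∧
      n ≤ mf i j ∧ (s i j : ℝ) / 2 < dist (f^[mf i j] (x i)) (f^[mf i j] (x j)) := by
  suffices h : ∀ i j, ∃ mc mf, i ≠ j →
      n ≤ mc ∧ dist (f^[mc] (x i)) (f^[mc] (x j)) < η ∧
      n ≤ mf ∧ (s i j : ℝ) / 2 < dist (f^[mf] (x i)) (f^[mf] (x j)) by
    choose mc mf h using h
    exact ⟨mc, mf, h⟩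
  intro i j
  by_cases hij : i = j
  · exact ⟨0, 0, (absurd hij ·)⟩
  have hsep := hR.sep_le i j hij _ (hxR i) _ (hxR j)
  have hpos := hR.sep_pos i j hij
  have hxne : x i ≠ x j := fun h => hpos.ne' (by simpa [h] using hsep)
  obtain ⟨mc, hmc, hc⟩ := frequently_atTop.1 ((hY _ (hR.subset i (hxR i)) _
    (hR.subset j (hxR j)) hxne).1.frequently_dist_lt hη) n
  have hhalf : ENNReal.ofReal ((s i j : ℝ) / 2) < s i j := by
    rw [← ENNReal.ofReal_coe_nnreal, ENNReal.ofReal_lt_ofReal_iff (by positivity)]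
    exact half_lt_self (by positivity)
  obtain ⟨mf, hmf, hf⟩ :=
    frequently_atTop.1 (frequently_lt_dist_of_ofReal_lt (hhalf.trans_le hsep)) n
  exact ⟨mc, mf, fun _ => ⟨hmc, hc, hmf, hf⟩⟩

theorem IsSeparatedPools.exists_isScrambledLevel [Finite ι] (hκ : ℵ₀ ≤ κ) {D : Set X} (hD : Dense D)
    (hDκ : #D ≤ κ) (hf : Continuous f) (hY : Scrambled f Y) (hR : IsSeparatedPools f Y κ R s)
    {O : ι → Set X} (hO : ∀ i, IsOpen (O i)) (hRO : ∀ i, R i ⊆ O i) (n : ℕ) :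
    ∃ C : Cells ι X, C.IsScrambledLevel f Y κ n ∧ C.sep = s ∧
      ∀ i, C.pool i ⊆ R i ∧ C.cell i ⊆ O i := by
  choose x hxR hx using fun i => exists_condensation_point hκ hD hDκ (hR.lt_mk i)
  set η : ℝ := 1 / (n + 1)
  have hη : 0 < η := Nat.one_div_pos_of_nat
  obtain ⟨mc, mf, hm⟩ := hR.exists_times hY hxR n (half_pos hη)
  -- near `x i`, the orbit follows that of `x i` at all the finitely many chosen times
  have hnhds : ∀ i, ∀ᶠ z in 𝓝 (x i), z ∈ O i ∧ ∀ j k, j ≠ k →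
      dist (f^[mc j k] z) (f^[mc j k] (x i)) < η / 4 ∧
      dist (f^[mf j k] z) (f^[mf j k] (x i)) < s j k / 8 := by
    refine fun i => ((hO i).eventually_mem (hRO i (hxR i))).and ?_
    refine eventually_all.2 fun j => eventually_all.2 fun k => eventually_imp_distrib_left.2
      fun hjk => (hf.eventually_dist_iterate_lt _ _ (by positivity)).and
      (hf.eventually_dist_iterate_lt _ _ (by have := hR.sep_pos j k hjk; positivity))
  choose r hr hrO using fun i => nhds_basis_closedBall.eventually_iff.1 (hnhds i)
  have hcell : ∀ i, ∀ z ∈ closedBall (x i) (min (r i) η), _ :=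
    fun i z hz => hrO i (closedBall_subset_closedBall (min_le_left _ _) hz)
  refine ⟨⟨x, fun i => min (r i) η, fun i => R i ∩ ball (x i) (min (r i) η), s⟩,
    ⟨⟨fun i => inter_subset_left.trans (hR.subset i), fun i => hx i _ (lt_min (hr i) hη),
    hR.sep_pos, fun i j hij x hx y hy => hR.sep_le i j hij x hx.1 y hy.1⟩,
    fun i => inter_subset_right, fun i => min_le_right _ _, fun i j hij => ⟨mc i j,
    (hm i j hij).1, fun z hz y hy => ?_⟩, fun i j hij => ⟨mf i j, (hm i j hij).2.2.1,
    fun z hz y hy => ?_⟩⟩, rfl, fun i => ⟨inter_subset_left, fun z hz => (hcell i z hz).1⟩⟩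
  · have h₁ := ((hcell i z hz).2 i j hij).1
    have h₂ := ((hcell j y hy).2 i j hij).1
    have := (hm i j hij).2.1
    have := dist_triangle4 (f^[mc i j] z) (f^[mc i j] (x i)) (f^[mc i j] (x j)) (f^[mc i j] y)
    rw [dist_comm] at h₂
    linarith
  · have h₁ := ((hcell i z hz).2 i j hij).2
    have h₂ := ((hcell j y hy).2 i j hij).2
    have := (hm i j hij).2.2.2
    have := dist_triangle4 (f^[mf i j] (x i)) (f^[mf i j] z) (f^[mf i j] y) (f^[mf i j] (x j))
    rw [dist_comm] at h₁
    linarith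

end Level

section Tree

variable {X : Type u} [MetricSpace X] {f : X → X} {Y : Set X} {κ : Cardinal.{u}} {n : ℕ}

def Refines (C' : Cells (List.Vector Bool (n + 1)) X) (C : Cells (List.Vector Bool n) X) :
    Prop :=
  (∀ v, C'.cell v ⊆ C.cell v.tail) ∧ ∀ v w, v.tail ≠ w.tail → C'.sep v w = C.sep v.tail w.tail

theorem IsSeparatedPools.exists_children (hκ : ℵ₀ ≤ κ) (hY : Scrambled f Y)
    {R : List.Vector Bool n → Set X} {s : List.Vector Bool n → List.Vector Bool n → ℝ≥0}
    (hR : IsSeparatedPools f Y κ R s) :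
    ∃ (R' : List.Vector Bool (n + 1) → Set X) (s' : _ → _ → ℝ≥0),
      IsSeparatedPools f Y κ R' s' ∧ (∀ w, R' w ⊆ R w.tail) ∧
      ∀ v w, v.tail ≠ w.tail → s' v w = s v.tail w.tail := by
  choose P₀ hP₀ P₁ hP₁ hP₀κ hP₁κ δ hδ hδP using
    fun v => hY.exists_separated_subsets hκ (hR.subset v) (hR.lt_mk v)
  let R' : List.Vector Bool (n + 1) → Set X := fun w => bif w.head then P₁ w.tail else P₀ w.tail
  have hR'R : ∀ w, R' w ⊆ R w.tail := fun w => by cases hw : w.head <;> simp [R', hw, hP₀, hP₁]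
  refine ⟨R', fun v w => if v.tail = w.tail then δ v.tail else s v.tail w.tail,
    ⟨fun w => (hR'R w).trans (hR.subset _),
    fun w => by cases hw : w.head <;> simp [R', hw, hP₀κ, hP₁κ],
    fun v w hvw => ?_, fun v w hvw x hx y hy => ?_⟩, hR'R, fun v w h => if_neg h⟩
  · split_ifs with h
    exacts [hδ _, hR.sep_pos _ _ h]
  split_ifs with h
  swap
  · exact hR.sep_le _ _ h x (hR'R v hx) y (hR'R w hy)
  have hhead : v.head ≠ w.head := fun hh =>
    hvw (by rw [← v.cons_head_tail, ← w.cons_head_tail, hh, h])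
  cases hv : v.head <;> cases hw : w.head <;>
    simp only [R', hv, hw, h, cond_true, cond_false, ne_eq, not_true] at hhead hx hy ⊢
  · exact hδP _ x hx y hy
  · rw [orbitLimsupEDist_comm]
    exact hδP _ y hy x hx

theorem IsScrambledLevel.exists_refines (hκ : ℵ₀ ≤ κ) {D : Set X} (hD : Dense D) (hDκ : #D ≤ κ)
    (hf : Continuous f) (hY : Scrambled f Y) {C : Cells (List.Vector Bool n) X}
    (hC : C.IsScrambledLevel f Y κ n) :
    ∃ C' : Cells (List.Vector Bool (n + 1)) X,
      C'.IsScrambledLevel f Y κ (n + 1) ∧ C'.Refines C := by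
  obtain ⟨R, s, hR, hRC, hs⟩ := hC.pools.exists_children hκ hY
  obtain ⟨C', hC', rfl, hC'R⟩ := hR.exists_isScrambledLevel hκ hD hDκ hf hY
    (O := fun w => ball (C.center w.tail) (C.radius w.tail)) (fun _ => isOpen_ball)
    (fun w => (hRC w).trans (hC.pool_subset_ball _)) (n + 1)
  exact ⟨C', hC', fun w => (hC'R w).2.trans ball_subset_closedBall, hs⟩

theorem exists_isScrambledLevel_zero (hκ : ℵ₀ ≤ κ) {D : Set X} (hD : Dense D) (hDκ : #D ≤ κ)
    (hf : Continuous f) (hY : Scrambled f Y) (hYκ : κ < #Y) :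
    ∃ C : Cells (List.Vector Bool 0) X, C.IsScrambledLevel f Y κ 0 := by
  have hR : IsSeparatedPools f Y κ (fun _ : List.Vector Bool 0 => Y) (fun _ _ => 1) :=
    ⟨fun _ => subset_rfl, fun _ => hYκ, fun v w h => (h (Subsingleton.elim v w)).elim,
      fun v w h => (h (Subsingleton.elim v w)).elim⟩
  obtain ⟨C, hC, -⟩ := hR.exists_isScrambledLevel hκ hD hDκ hf hY (fun _ => isOpen_univ)
    (fun _ => subset_univ _) 0
  exact ⟨C, hC⟩

open PiNat

variable {C : ∀ n, Cells (List.Vector Bool n) X}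

theorem exists_isEmbedding_s18 [CompleteSpace X] (hC : ∀ n, (C n).IsScrambledLevel f Y κ n)
    (hCC : ∀ n, (C (n + 1)).Refines (C n)) :
    ∃ φ : (ℕ → Bool) → X, IsEmbedding φ ∧
      ∀ σ n, φ σ ∈ (C n).cell ⟨res σ n, res_length σ n⟩ := by
  set A : List Bool → Set X := fun l => (C l.length).cell ⟨l, rfl⟩
  have hA : ∀ n l (h : l.length = n), A l = (C n).cell ⟨l, h⟩ := by rintro _ l rfl; rfl
  have hdiam : CantorScheme.VanishingDiam A := by
    refine fun σ => tendsto_of_tendsto_of_tendsto_of_le_of_le tendsto_const_nhds ?_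
      (fun _ => zero_le) fun n => (hA n _ (res_length σ n)).symm ▸ (hC n).ediam_cell_le _
    simpa using ENNReal.tendsto_ofReal (tendsto_one_div_add_atTop_nhds_zero_nat.const_mul 2)
  obtain ⟨φ, hφ, hmem⟩ := CantorScheme.exists_isEmbedding_s18 (A := A)
    (fun _ => isClosed_closedBall) (fun l a => (hCC l.length).1 ⟨a :: l, rfl⟩)
    (fun l a b hab => (hC _).disjoint_cell fun h =>
      hab (List.cons.inj (congrArg Subtype.val h)).1)
    hdiam fun l => ⟨_, (hC _).center_mem_cell _⟩
  exact ⟨φ, hφ, fun σ n => hA n _ _ ▸ hmem σ n⟩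

theorem scrambled_range (hC : ∀ n, (C n).IsScrambledLevel f Y κ n)
    (hCC : ∀ n, (C (n + 1)).Refines (C n)) {φ : (ℕ → Bool) → X}
    (hφ : ∀ σ n, φ σ ∈ (C n).cell ⟨res σ n, res_length σ n⟩) : Scrambled f (range φ) := by
  rintro _ ⟨σ, rfl⟩ _ ⟨τ, rfl⟩ hne
  let v : ∀ (σ : ℕ → Bool) n, List.Vector Bool n := fun σ n => ⟨res σ n, res_length σ n⟩
  obtain ⟨i, hi⟩ : ∃ i, σ i ≠ τ i := Function.ne_iff.1 fun h => hne (h ▸ rfl)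
  have hv : ∀ n, i < n → v σ n ≠ v τ n :=
    fun n hn h => hi (res_eq_res.1 (congrArg Subtype.val h) hn)
  set δ := (C (i + 1)).sep (v σ (i + 1)) (v τ (i + 1))
  have hsep : ∀ n, i < n → (C n).sep (v σ n) (v τ n) = δ := by
    intro n hn
    induction n, hn using Nat.le_induction with
    | base => rfl
    | succ n hn ih => exact ((hCC n).2 (v σ (n + 1)) (v τ (n + 1)) (hv n hn)).trans ih
  constructor
  · refine proximal_of_forall_frequently fun ε hε => frequently_atTop.2 fun N => ?_
    obtain ⟨k, hk⟩ := exists_nat_one_div_lt hε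
    obtain ⟨m, hm, h⟩ := (hC (max N (max k (i + 1)))).exists_dist_le _ _ (hv _ (by omega))
    refine ⟨m, (le_max_left _ _).trans hm, (h _ (hφ σ _) _ (hφ τ _)).trans (le_trans ?_ hk.le)⟩
    gcongr
    exact_mod_cast (le_max_left _ _).trans (le_max_right _ _)
  · have hδ := (hC (i + 1)).pools.sep_pos _ _ (hv (i + 1) (by omega))
    refine not_asymptotic_of_frequently (c := (δ : ℝ) / 4) (by positivity)
      (frequently_atTop.2 fun N => ?_)
    obtain ⟨m, hm, h⟩ := (hC (max N (i + 1))).exists_le_dist _ _ (hv _ (by omega))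
    exact ⟨m, (le_max_left _ _).trans hm,
      hsep (max N (i + 1)) (by omega) ▸ h _ (hφ σ _) _ (hφ τ _)⟩

end Tree

end Cells

/-- A dynamical system on a complete metric space with a dense set of size `κ` and a
scrambled set of size `> κ` has a scrambled Cantor set. -/
theorem stmt_18 {X K : Type u} [MetricSpace X] [CompleteSpace X] [Infinite K]
    (D : Set X) (hD : Dense D) (hDcard : Cardinal.mk D = Cardinal.mk K)
    (f : X → X) (hf : Continuous f)
    (Y : Set X) (hYcard : Cardinal.mk K < Cardinal.mk Y) (hY : Scrambled f Y) :
    ∃ C : Set X, Nonempty ((ℕ → Bool) ≃ₜ C) ∧ Scrambled f C := by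
  have hκ : ℵ₀ ≤ #K := infinite_iff.1 ‹_›
  obtain ⟨C, hC⟩ := exists_seq_of_succ (T := fun n => Cells (List.Vector Bool n) X)
    (P := fun n C => C.IsScrambledLevel f Y #K n) (r := fun _ C' C => C'.Refines C)
    (Cells.exists_isScrambledLevel_zero hκ hD hDcard.le hf hY hYcard)
    fun _ _ hC => hC.exists_refines hκ hD hDcard.le hf hY
  have hgood := fun n => (hC n).1
  have hrefines := fun n => (hC n).2
  obtain ⟨φ, hφ, hmem⟩ := Cells.exists_isEmbedding_s18 hgood hrefines
  exact ⟨range φ, ⟨hφ.toHomeomorph⟩, Cells.scrambled_range hgood hrefines hmem⟩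
end
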